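/- arXiv:2603.13798 — 7 statements merged into one kernel-verified Lean document; each statement's English description precedes it below -/
import Mathlib

section
/- For every q ∈ (0,1), the means a_n := ∫ z dμ_n(z) are submultiplicative: a_{n+m} ≤ a_n · a_m for all n, m ≥ 0. Consequently the limit α(q) := lim_{n→∞} (1/n)·log a_n exists and satisfies 0 ≤ α(q) ≤ log 2. -/
open MeasureTheory ProbabilityTheory Filter

noncomputable def Sfun : ℝ × ℝ → ℝ := fun p => p.1 + p.2

noncomputable def Dfun : ℝ × ℝ × ℝ × ℝ → ℝ := fun p =>
  ((p.1 + p.2.1) * (p.2.2.1 + p.2.2.2)) / (p.1 + p.2.1 + p.2.2.1 + p.2.2.2)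

/-- One-step resistance recursion map on Borel measures on ℝ. -/
noncomputable def Tq (q : ℝ) (μ : Measure ℝ) : Measure ℝ :=
  ENNReal.ofReal (1 - q) • Measure.map Sfun (μ.prod μ) +
    ENNReal.ofReal q • Measure.map Dfun (μ.prod (μ.prod (μ.prod μ)))

/-- μₙ = T_qⁿ δ₁ : law of the two-terminal resistance after n replacement steps. -/
noncomputable def mu (q : ℝ) (n : ℕ) : Measure ℝ := (Tq q)^[n] (Measure.dirac 1)

/-!
The series map `(x, y) ↦ x + y` and the parallel map `(x, y) ↦ x y / (x + y)` are nondecreasing,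
concave and continuous in each variable on `[0, ∞)`, and `D` is the parallel map applied to two
independent series pairs. Hence `T_q` preserves the increasing concave order `≤_icv` between
boundedly supported laws on `[0, ∞)`: replace the two independent inputs one at a time. By Jensen,
`μₘ ≤_icv δ_{aₘ}`, so `μₙ₊ₘ = T_qⁿ μₘ ≤_icv T_qⁿ δ_{aₘ}`, which is `μₙ` scaled by `aₘ` because `T_q`
is positively homogeneous; testing against the identity gives `aₙ₊ₘ ≤ aₙ aₘ`. Fekete's lemma for
`log aₙ` gives the limit, and `1 ≤ aₙ ≤ 2ⁿ` gives the bounds.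
-/

open Set

structure IcvTest (f : ℝ → ℝ) : Prop where
  measurable : Measurable f
  monotoneOn : MonotoneOn f (Ici 0)
  concaveOn : ConcaveOn ℝ (Ici 0) f
  continuousOn : ContinuousOn f (Ici 0)

/-- `ν ≤_icv ρ`, the increasing concave order on `[0, ∞)`. -/
def IcvLE (ν ρ : Measure ℝ) : Prop :=
  ∀ f, IcvTest f → ∫ z, f z ∂ν ≤ ∫ z, f z ∂ρ

namespace IcvTest

lemma id : IcvTest id :=
  ⟨measurable_id, monotoneOn_id, concaveOn_id (convex_Ici 0), continuousOn_id⟩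

lemma comp {f g : ℝ → ℝ} (hf : IcvTest f) (hg : IcvTest g) (hmaps : MapsTo g (Ici 0) (Ici 0)) :
    IcvTest (f ∘ g) := by
  have hconv : Convex ℝ (g '' Ici 0) := (isPreconnected_Ici.image g hg.continuousOn).convex
  exact ⟨hf.measurable.comp hg.measurable, hf.monotoneOn.comp hg.monotoneOn hmaps,
    (hf.concaveOn.subset hmaps.image_subset hconv).comp hg.concaveOn
      (hf.monotoneOn.mono hmaps.image_subset),
    hf.continuousOn.comp hg.continuousOn hmaps⟩

lemma integrable_comp {α : Type*} [MeasurableSpace α] {μ : Measure α} [IsFiniteMeasure μ]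
    {f : ℝ → ℝ} (hf : IcvTest f) {g : α → ℝ} (hg : AEMeasurable g μ) {a b : ℝ} (ha : 0 ≤ a)
    (h : ∀ᵐ x ∂μ, g x ∈ Icc a b) : Integrable (fun x => f (g x)) μ := by
  refine Integrable.of_mem_Icc (f a) (f b) (hf.measurable.comp_aemeasurable hg) ?_
  filter_upwards [h] with x hx
  have hgx : g x ∈ Ici 0 := ha.trans hx.1
  exact ⟨hf.monotoneOn ha hgx hx.1, hf.monotoneOn hgx (hgx.trans hx.2) hx.2⟩

end IcvTest

structure IcvOp (op : ℝ × ℝ → ℝ) : Prop where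
  measurable : Measurable op
  comm : ∀ x y, op (x, y) = op (y, x)
  nonneg : ∀ x y, 0 ≤ x → 0 ≤ y → 0 ≤ op (x, y)
  icvTest_right : ∀ x, 0 ≤ x → IcvTest fun y => op (x, y)

noncomputable def iidMap (op : ℝ × ℝ → ℝ) (ν : Measure ℝ) : Measure ℝ := (ν.prod ν).map op

instance (op : ℝ × ℝ → ℝ) (ν : Measure ℝ) [IsFiniteMeasure ν] : IsFiniteMeasure (iidMap op ν) := by
  unfold iidMap; infer_instance

instance (op : ℝ × ℝ → ℝ) (ν : Measure ℝ) [SFinite ν] : SFinite (iidMap op ν) := by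
  unfold iidMap; infer_instance

lemma isProbabilityMeasure_iidMap {op : ℝ × ℝ → ℝ} (hop : Measurable op) (ν : Measure ℝ)
    [IsProbabilityMeasure ν] : IsProbabilityMeasure (iidMap op ν) :=
  Measure.isProbabilityMeasure_map hop.aemeasurable

lemma ae_prod_mem {ν ρ : Measure ℝ} [SFinite ρ] {s t : Set ℝ} (hs : ∀ᵐ x ∂ν, x ∈ s)
    (ht : ∀ᵐ y ∂ρ, y ∈ t) : ∀ᵐ p ∂ν.prod ρ, p.1 ∈ s ∧ p.2 ∈ t :=
  (Measure.quasiMeasurePreserving_fst.ae hs).and (Measure.quasiMeasurePreserving_snd.ae ht)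

namespace IcvOp

variable {op : ℝ × ℝ → ℝ}

lemma mem_Icc (hop : IcvOp op) {a b x y : ℝ} (ha : 0 ≤ a) (hx : x ∈ Icc a b) (hy : y ∈ Icc a b) :
    op (x, y) ∈ Icc (op (a, a)) (op (b, b)) := by
  have hmono : ∀ {u v w : ℝ}, 0 ≤ u → 0 ≤ v → v ≤ w → op (u, v) ≤ op (u, w) :=
    fun hu hv hvw => (hop.icvTest_right _ hu).monotoneOn hv (hv.trans hvw) hvw
  have hx0 : 0 ≤ x := ha.trans hx.1
  have hy0 : 0 ≤ y := ha.trans hy.1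
  constructor
  · calc op (a, a) ≤ op (a, y) := hmono ha ha hy.1
      _ = op (y, a) := hop.comm a y
      _ ≤ op (y, x) := hmono hy0 ha hx.1
      _ = op (x, y) := hop.comm y x
  · calc op (x, y) ≤ op (x, b) := hmono hx0 hy0 hy.2
      _ = op (b, x) := hop.comm x b
      _ ≤ op (b, b) := hmono (hx0.trans hx.2) hx0 hx.2

lemma ae_mem_Icc_prod (hop : IcvOp op) {ν ρ : Measure ℝ} [SFinite ρ] {a b : ℝ} (ha : 0 ≤ a)
    (hν : ∀ᵐ z ∂ν, z ∈ Icc a b) (hρ : ∀ᵐ z ∂ρ, z ∈ Icc a b) :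
    ∀ᵐ p ∂ν.prod ρ, op p ∈ Icc (op (a, a)) (op (b, b)) := by
  filter_upwards [ae_prod_mem hν hρ] with p hp
  exact hop.mem_Icc ha hp.1 hp.2

lemma ae_mem_Icc_iidMap (hop : IcvOp op) {ν : Measure ℝ} [SFinite ν] {a b : ℝ} (ha : 0 ≤ a)
    (hν : ∀ᵐ z ∂ν, z ∈ Icc a b) : ∀ᵐ z ∂iidMap op ν, z ∈ Icc (op (a, a)) (op (b, b)) :=
  (ae_map_iff hop.measurable.aemeasurable measurableSet_Icc).2 (hop.ae_mem_Icc_prod ha hν hν)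

lemma integral_prod_le_integral_prod_right (hop : IcvOp op) {μ ν ρ : Measure ℝ} [IsFiniteMeasure μ]
    [IsFiniteMeasure ν] [IsFiniteMeasure ρ] {a b : ℝ} (ha : 0 ≤ a) (hμ : ∀ᵐ z ∂μ, z ∈ Icc a b)
    (hν : ∀ᵐ z ∂ν, z ∈ Icc a b) (hρ : ∀ᵐ z ∂ρ, z ∈ Icc a b) (h : IcvLE ν ρ) {f : ℝ → ℝ}
    (hf : IcvTest f) : ∫ p, f (op p) ∂μ.prod ν ≤ ∫ p, f (op p) ∂μ.prod ρ := by
  have hint : ∀ {κ : Measure ℝ} [IsFiniteMeasure κ], (∀ᵐ z ∂κ, z ∈ Icc a b) →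
      Integrable (fun p => f (op p)) (μ.prod κ) := fun hκ =>
    hf.integrable_comp hop.measurable.aemeasurable (hop.nonneg a a ha ha)
      (hop.ae_mem_Icc_prod ha hμ hκ)
  rw [integral_prod _ (hint hν), integral_prod _ (hint hρ)]
  refine integral_mono_ae (hint hν).integral_prod_left (hint hρ).integral_prod_left ?_
  filter_upwards [hμ] with x hx
  have hx0 : 0 ≤ x := ha.trans hx.1
  exact h _ (hf.comp (hop.icvTest_right x hx0) fun y hy => hop.nonneg x y hx0 hy)

end IcvOp

lemma IcvLE.iidMap {op : ℝ × ℝ → ℝ} (hop : IcvOp op) {ν ρ : Measure ℝ} [IsFiniteMeasure ν]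
    [IsFiniteMeasure ρ] {a b : ℝ} (ha : 0 ≤ a) (hν : ∀ᵐ z ∂ν, z ∈ Icc a b)
    (hρ : ∀ᵐ z ∂ρ, z ∈ Icc a b) (h : IcvLE ν ρ) : IcvLE (iidMap op ν) (iidMap op ρ) := by
  intro f hf
  simp only [_root_.iidMap,
    integral_map hop.measurable.aemeasurable hf.measurable.aestronglyMeasurable]
  calc ∫ p, f (op p) ∂ν.prod ν ≤ ∫ p, f (op p) ∂ν.prod ρ :=
        hop.integral_prod_le_integral_prod_right ha hν hν hρ h hf
    _ = ∫ p, f (op p) ∂ρ.prod ν := by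
        rw [← integral_prod_swap]
        simp only [Prod.swap, ← hop.comm]
    _ ≤ ∫ p, f (op p) ∂ρ.prod ρ := hop.integral_prod_le_integral_prod_right ha hρ hν hρ h hf

lemma IcvLE.smul_add {ν₁ ν₂ ρ₁ ρ₂ : Measure ℝ} [IsFiniteMeasure ν₁] [IsFiniteMeasure ν₂]
    [IsFiniteMeasure ρ₁] [IsFiniteMeasure ρ₂] {a₁ b₁ a₂ b₂ : ℝ} (ha₁ : 0 ≤ a₁) (ha₂ : 0 ≤ a₂)
    (hν₁ : ∀ᵐ z ∂ν₁, z ∈ Icc a₁ b₁) (hρ₁ : ∀ᵐ z ∂ρ₁, z ∈ Icc a₁ b₁)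
    (hν₂ : ∀ᵐ z ∂ν₂, z ∈ Icc a₂ b₂) (hρ₂ : ∀ᵐ z ∂ρ₂, z ∈ Icc a₂ b₂)
    (h₁ : IcvLE ν₁ ρ₁) (h₂ : IcvLE ν₂ ρ₂) {c₁ c₂ : ENNReal} (hc₁ : c₁ ≠ ⊤) (hc₂ : c₂ ≠ ⊤) :
    IcvLE (c₁ • ν₁ + c₂ • ν₂) (c₁ • ρ₁ + c₂ • ρ₂) := by
  intro f hf
  have hint : ∀ {κ : Measure ℝ} [IsFiniteMeasure κ] {a b : ℝ}, 0 ≤ a → (∀ᵐ z ∂κ, z ∈ Icc a b) →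
      ∀ {c : ENNReal}, c ≠ ⊤ → Integrable f (c • κ) := fun ha hκ _ hc =>
    (hf.integrable_comp aemeasurable_id ha hκ).smul_measure hc
  rw [integral_add_measure (hint ha₁ hν₁ hc₁) (hint ha₂ hν₂ hc₂),
    integral_add_measure (hint ha₁ hρ₁ hc₁) (hint ha₂ hρ₂ hc₂)]
  simp only [integral_smul_measure]
  exact add_le_add (smul_le_smul_of_nonneg_left (h₁ f hf) ENNReal.toReal_nonneg)
    (smul_le_smul_of_nonneg_left (h₂ f hf) ENNReal.toReal_nonneg)

lemma icvLE_dirac_integral {ν : Measure ℝ} [IsProbabilityMeasure ν] {a b : ℝ} (ha : 0 ≤ a)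
    (hν : ∀ᵐ z ∂ν, z ∈ Icc a b) : IcvLE ν (Measure.dirac (∫ z, z ∂ν)) := by
  intro f hf
  rw [integral_dirac]
  exact hf.concaveOn.le_map_integral hf.continuousOn isClosed_Ici
    (hν.mono fun z hz => ha.trans hz.1) (Integrable.of_mem_Icc a b aemeasurable_id hν)
    (hf.integrable_comp aemeasurable_id ha hν)

lemma iidMap_map_mul {op : ℝ × ℝ → ℝ} (hop : Measurable op) {c : ℝ}
    (hhom : ∀ x y, op (c * x, c * y) = c * op (x, y)) (ν : Measure ℝ) [SFinite ν] :
    iidMap op (ν.map (c * ·)) = (iidMap op ν).map (c * ·) := by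
  have hmc : Measurable (c * · : ℝ → ℝ) := measurable_const_mul c
  rw [iidMap, iidMap, Measure.map_prod_map _ _ hmc hmc, Measure.map_map hop (hmc.prodMap hmc),
    Measure.map_map hmc hop]
  congr 1
  funext p
  exact hhom p.1 p.2

noncomputable def par (p : ℝ × ℝ) : ℝ := p.1 * p.2 / (p.1 + p.2)

lemma measurable_Sfun : Measurable Sfun := measurable_fst.add measurable_snd

lemma measurable_par : Measurable par :=
  (measurable_fst.mul measurable_snd).div (measurable_fst.add measurable_snd)

lemma par_add_self (x : ℝ) : par (x + x, x + x) = x := by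
  rcases eq_or_ne x 0 with rfl | hx
  · simp [par]
  · simp only [par]
    field_simp

lemma icvOp_Sfun : IcvOp Sfun where
  measurable := measurable_Sfun
  comm x y := add_comm x y
  nonneg _ _ hx hy := add_nonneg hx hy
  icvTest_right x _ :=
    ⟨measurable_const_add x, fun _ _ _ _ h => add_le_add le_rfl h,
      (concaveOn_id (convex_Ici 0)).add_const x |>.congr fun _ _ => add_comm _ _,
      (continuous_const_add x).continuousOn⟩

lemma icvTest_par_right {x : ℝ} (hx : 0 < x) : IcvTest fun y => par (x, y) := by
  refine ⟨measurable_par.comp measurable_prodMk_left, ?_, ?_, ?_⟩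
  · intro y hy y' hy' hyy'
    simp only [par, mem_Ici] at *
    rw [div_le_div_iff₀ (by linarith) (by linarith)]
    nlinarith [mul_le_mul_of_nonneg_left hyy' (mul_nonneg hx.le hx.le)]
  · refine ⟨convex_Ici 0, fun y hy y' hy' s t hs ht hst => ?_⟩
    simp only [par, smul_eq_mul, mem_Ici] at *
    obtain rfl : t = 1 - s := by linarith
    rw [mul_div_assoc', mul_div_assoc', div_add_div _ _ (by positivity) (by positivity),
      div_le_div_iff₀ (by positivity) (by positivity)]
    -- the gap is a positive multiple of `s t ((y - y') x)²`
    nlinarith [mul_nonneg (mul_nonneg hs ht) (sq_nonneg ((y - y') * x))]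
  · exact (continuousOn_const.mul continuousOn_id).div (continuousOn_const.add continuousOn_id)
      fun y hy => by simp only [mem_Ici] at hy; positivity

lemma icvOp_par : IcvOp par where
  measurable := measurable_par
  comm x y := by simp only [par, mul_comm, add_comm]
  nonneg x y hx hy := by simp only [par]; positivity
  icvTest_right x hx := by
    rcases hx.eq_or_lt with rfl | hx
    · simpa [par] using (⟨measurable_const, monotoneOn_const, concaveOn_const 0 (convex_Ici 0),
        continuousOn_const⟩ : IcvTest fun _ => (0 : ℝ))
    · exact icvTest_par_right hx

lemma measurable_Dfun : Measurable Dfun := by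
  unfold Dfun; fun_prop

lemma map_Dfun_prod (ν : Measure ℝ) [SFinite ν] :
    (ν.prod (ν.prod (ν.prod ν))).map Dfun = iidMap par (iidMap Sfun ν) := by
  rw [iidMap, iidMap, Measure.map_prod_map _ _ measurable_Sfun measurable_Sfun,
    Measure.map_map measurable_par (measurable_Sfun.prodMap measurable_Sfun),
    ← Measure.prodAssoc_prod, Measure.map_map measurable_Dfun MeasurableEquiv.prodAssoc.measurable]
  congr 1
  funext ⟨⟨x₁, x₂⟩, x₃, x₄⟩
  simp only [Function.comp_apply, MeasurableEquiv.prodAssoc, MeasurableEquiv.coe_mk,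
    Equiv.prodAssoc_apply, Prod.map_apply, Dfun, par, Sfun, add_assoc]

lemma Tq_eq (q : ℝ) (ν : Measure ℝ) [SFinite ν] :
    Tq q ν = ENNReal.ofReal (1 - q) • iidMap Sfun ν +
      ENNReal.ofReal q • iidMap par (iidMap Sfun ν) := by
  rw [Tq, map_Dfun_prod]
  rfl

instance (q : ℝ) (ν : Measure ℝ) [IsFiniteMeasure ν] : IsFiniteMeasure (Tq q ν) := by
  have := (Measure.map Sfun (ν.prod ν)).smul_finite (ENNReal.ofReal_ne_top (r := 1 - q))
  have := (Measure.map Dfun (ν.prod (ν.prod (ν.prod ν)))).smul_finite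
    (ENNReal.ofReal_ne_top (r := q))
  unfold Tq; infer_instance

lemma isProbabilityMeasure_Tq {q : ℝ} (hq : q ∈ Icc 0 1) (ν : Measure ℝ)
    [IsProbabilityMeasure ν] : IsProbabilityMeasure (Tq q ν) := by
  have := isProbabilityMeasure_iidMap measurable_Sfun ν
  have := isProbabilityMeasure_iidMap measurable_par (iidMap Sfun ν)
  constructor
  rw [Tq_eq]
  simp [← ENNReal.ofReal_add (sub_nonneg.2 hq.2) hq.1]

lemma ae_mem_Icc_Tq (q : ℝ) {ν : Measure ℝ} [SFinite ν] {a b : ℝ} (ha : 0 ≤ a)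
    (hν : ∀ᵐ z ∂ν, z ∈ Icc a b) : ∀ᵐ z ∂Tq q ν, z ∈ Icc a (b + b) := by
  have hS := icvOp_Sfun.ae_mem_Icc_iidMap ha hν
  have hP := icvOp_par.ae_mem_Icc_iidMap (icvOp_Sfun.nonneg a a ha ha) hS
  simp only [Sfun, par_add_self] at hS hP
  rw [Tq_eq, ae_add_measure_iff]
  constructor
  · exact Measure.ae_smul_measure (hS.mono fun z hz => ⟨by linarith [hz.1], hz.2⟩) _
  · exact Measure.ae_smul_measure (hP.mono fun z hz => ⟨hz.1, by linarith [hz.1, hz.2]⟩) _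

lemma icvLE_Tq (q : ℝ) {ν ρ : Measure ℝ} [IsFiniteMeasure ν] [IsFiniteMeasure ρ] {a b : ℝ}
    (ha : 0 ≤ a) (hν : ∀ᵐ z ∂ν, z ∈ Icc a b) (hρ : ∀ᵐ z ∂ρ, z ∈ Icc a b) (h : IcvLE ν ρ) :
    IcvLE (Tq q ν) (Tq q ρ) := by
  have ha' : 0 ≤ Sfun (a, a) := icvOp_Sfun.nonneg a a ha ha
  have hSν := icvOp_Sfun.ae_mem_Icc_iidMap ha hν
  have hSρ := icvOp_Sfun.ae_mem_Icc_iidMap ha hρ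
  have hS := h.iidMap icvOp_Sfun ha hν hρ
  rw [Tq_eq, Tq_eq]
  exact hS.smul_add ha' (icvOp_par.nonneg _ _ ha' ha') hSν hSρ
    (icvOp_par.ae_mem_Icc_iidMap ha' hSν) (icvOp_par.ae_mem_Icc_iidMap ha' hSρ)
    (hS.iidMap icvOp_par ha' hSν hSρ) ENNReal.ofReal_ne_top ENNReal.ofReal_ne_top

lemma icvLE_Tq_iterate (q : ℝ) (n : ℕ) {ν ρ : Measure ℝ} [IsFiniteMeasure ν]
    [IsFiniteMeasure ρ] {a b : ℝ} (ha : 0 ≤ a) (hν : ∀ᵐ z ∂ν, z ∈ Icc a b)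
    (hρ : ∀ᵐ z ∂ρ, z ∈ Icc a b) (h : IcvLE ν ρ) : IcvLE ((Tq q)^[n] ν) ((Tq q)^[n] ρ) := by
  induction n generalizing ν ρ b with
  | zero => exact h
  | succ n ih =>
    exact ih (ae_mem_Icc_Tq q ha hν) (ae_mem_Icc_Tq q ha hρ) (icvLE_Tq q ha hν hρ h)

lemma Tq_map_mul (q c : ℝ) (ν : Measure ℝ) [SFinite ν] :
    Tq q (ν.map (c * ·)) = (Tq q ν).map (c * ·) := by
  have hmc : Measurable (c * · : ℝ → ℝ) := measurable_const_mul c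
  have hS : ∀ x y, Sfun (c * x, c * y) = c * Sfun (x, y) := fun x y => (mul_add c x y).symm
  have hP : ∀ x y, par (c * x, c * y) = c * par (x, y) := fun x y => by
    rcases eq_or_ne c 0 with rfl | hc
    · simp [par]
    · simp only [par]
      rw [← mul_add, mul_mul_mul_comm, mul_assoc, mul_div_mul_left _ _ hc, mul_div_assoc]
  rw [Tq_eq, Tq_eq, iidMap_map_mul measurable_Sfun hS, iidMap_map_mul measurable_par hP,
    Measure.map_add _ _ hmc, Measure.map_smul, Measure.map_smul]

lemma Tq_iterate_map_mul (q c : ℝ) (n : ℕ) (ν : Measure ℝ) [IsFiniteMeasure ν] :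
    (Tq q)^[n] (ν.map (c * ·)) = ((Tq q)^[n] ν).map (c * ·) := by
  induction n generalizing ν with
  | zero => rfl
  | succ n ih => simp only [Function.iterate_succ_apply, Tq_map_mul, ih]

lemma mu_succ (q : ℝ) (n : ℕ) : mu q (n + 1) = Tq q (mu q n) :=
  Function.iterate_succ_apply' _ _ _

lemma isProbabilityMeasure_mu {q : ℝ} (hq : q ∈ Icc 0 1) (n : ℕ) :
    IsProbabilityMeasure (mu q n) := by
  induction n with
  | zero => exact Measure.dirac.isProbabilityMeasure
  | succ n ih => rw [mu_succ]; exact isProbabilityMeasure_Tq hq _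

lemma ae_mem_Icc_mu {q : ℝ} (hq : q ∈ Icc 0 1) (n : ℕ) :
    ∀ᵐ z ∂mu q n, z ∈ Icc 1 ((2 : ℝ) ^ n) := by
  induction n with
  | zero => simp [mu]
  | succ n ih =>
    have := isProbabilityMeasure_mu hq n
    rw [mu_succ, pow_succ, mul_two]
    exact ae_mem_Icc_Tq q zero_le_one ih

lemma integral_mu_mem_Icc {q : ℝ} (hq : q ∈ Icc 0 1) (n : ℕ) :
    ∫ z, z ∂mu q n ∈ Icc 1 ((2 : ℝ) ^ n) := by
  have := isProbabilityMeasure_mu hq n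
  exact (convex_Icc _ _).integral_mem isClosed_Icc (ae_mem_Icc_mu hq n)
    (Integrable.of_mem_Icc _ _ aemeasurable_id (ae_mem_Icc_mu hq n))

lemma integral_mu_add_le {q : ℝ} (hq : q ∈ Icc 0 1) (n m : ℕ) :
    ∫ z, z ∂mu q (n + m) ≤ (∫ z, z ∂mu q n) * ∫ z, z ∂mu q m := by
  set M := ∫ z, z ∂mu q m
  have := isProbabilityMeasure_mu hq m
  have hM : ∀ᵐ z ∂Measure.dirac M, z ∈ Icc 1 ((2 : ℝ) ^ m) :=
    (ae_dirac_iff measurableSet_Icc).2 (integral_mu_mem_Icc hq m)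
  have hle := icvLE_Tq_iterate q n zero_le_one (ae_mem_Icc_mu hq m) hM
    (icvLE_dirac_integral zero_le_one (ae_mem_Icc_mu hq m)) _ IcvTest.id
  have hdirac : Measure.dirac M = (Measure.dirac 1).map (M * ·) := by
    rw [Measure.map_dirac' (measurable_const_mul M), mul_one]
  calc ∫ z, z ∂mu q (n + m) = ∫ z, z ∂(Tq q)^[n] (mu q m) := by
        rw [mu, mu, Function.iterate_add_apply]
    _ ≤ ∫ z, z ∂(Tq q)^[n] (Measure.dirac M) := hle
    _ = ∫ z, z ∂(mu q n).map (M * ·) := by rw [hdirac, Tq_iterate_map_mul]; rfl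
    _ = ∫ z, M * z ∂mu q n :=
        integral_map (measurable_const_mul M).aemeasurable aestronglyMeasurable_id
    _ = (∫ z, z ∂mu q n) * M := by rw [integral_const_mul, mul_comm]

theorem stmt1 (q : ℝ) (hq : q ∈ Set.Ioo (0 : ℝ) 1) :
    (∀ n m : ℕ, ∫ z, z ∂(mu q (n + m)) ≤ (∫ z, z ∂(mu q n)) * ∫ z, z ∂(mu q m)) ∧
    ∃ α : ℝ, 0 ≤ α ∧ α ≤ Real.log 2 ∧
      Tendsto (fun n : ℕ => (1 / (n : ℝ)) * Real.log (∫ z, z ∂(mu q n))) atTop (nhds α) := by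
  have hq' : q ∈ Icc 0 1 := Ioo_subset_Icc_self hq
  have hmean := integral_mu_mem_Icc hq'
  have hsub : Subadditive fun n => Real.log (∫ z, z ∂mu q n) := fun n m => by
    rw [← Real.log_mul (by linarith [(hmean n).1]) (by linarith [(hmean m).1])]
    exact Real.log_le_log (by linarith [(hmean (n + m)).1]) (integral_mu_add_le hq' n m)
  have hnonneg (n : ℕ) : 0 ≤ Real.log (∫ z, z ∂mu q n) / n :=
    div_nonneg (Real.log_nonneg (hmean n).1) n.cast_nonneg
  have hbdd : BddBelow (range fun n => Real.log (∫ z, z ∂mu q n) / n) :=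
    ⟨0, forall_mem_range.2 hnonneg⟩
  refine ⟨integral_mu_add_le hq', hsub.lim, ge_of_tendsto' (hsub.tendsto_lim hbdd) hnonneg, ?_,
    by simpa only [one_div_mul_eq_div] using hsub.tendsto_lim hbdd⟩
  calc hsub.lim ≤ Real.log (∫ z, z ∂mu q 1) / (1 : ℕ) := hsub.lim_le_div hbdd one_ne_zero
    _ ≤ Real.log 2 := by
      simpa using Real.log_le_log (by linarith [(hmean 1).1]) (hmean 1).2
end

section
/- Let q ∈ (0,1), λ > 0, and let (ν_n)_{n≥0} be Borel probability measures on ℝ, each supported in (0, ∞), satisfying the one-step scaled recursion ν_{n+1} = m_λ_*(T_q ν_n) for all n, where m_λ(x) := λ·x. If ν_n converges weakly to the Dirac mass δ_c at a constant c ≥ 0, then c = 0. -/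
open MeasureTheory ProbabilityTheory Filter

/-!
If `νₙ → δ_c` with `c > 0`, then eventually `νₙ` gives mass `≥ 1/2` to `I = [9c/10, 11c/10]`.
A series connection maps `I²` into `2I` and a parallel connection of two series pairs maps `I⁴`
into `I`, so `ν_{n+1}` gives mass `≥ (1-q)/4` to `2λI` and mass `≥ q/16` to `λI`. These two
closed intervals are disjoint, so one of them misses `c`, and the portmanteau theorem forces its
`νₙ`-mass to tend to `0`.
-/

namespace MeasureTheory.ProbabilityMeasure

variable {Ω ι : Type*} [MeasurableSpace Ω] [TopologicalSpace Ω] [OpensMeasurableSpace Ω]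
  [HasOuterApproxClosed Ω] {L : Filter ι} {μ : ProbabilityMeasure Ω} {μs : ι → ProbabilityMeasure Ω}

theorem eventually_lt_measure_of_tendsto (hμ : Tendsto μs L (nhds μ)) {G : Set Ω}
    (hG : IsOpen G) {a : ENNReal} (ha : a < (μ : Measure Ω) G) :
    ∀ᶠ i in L, a < (μs i : Measure Ω) G :=
  eventually_lt_of_lt_liminf (ha.trans_le (le_liminf_measure_open_of_tendsto hμ hG))

theorem eventually_measure_lt_of_tendsto (hμ : Tendsto μs L (nhds μ)) {F : Set Ω}
    (hF : IsClosed F) {a : ENNReal} (ha : (μ : Measure Ω) F < a) :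
    ∀ᶠ i in L, (μs i : Measure Ω) F < a :=
  eventually_lt_of_limsup_lt ((limsup_measure_closed_le_of_tendsto hμ hF).trans_lt ha)

theorem not_eventually_le_measure_of_tendsto_dirac [L.NeBot] {c : Ω}
    (hμ : Tendsto μs L (nhds ⟨Measure.dirac c, inferInstance⟩)) {F : Set Ω} (hF : IsClosed F)
    (hcF : c ∉ F) {w : ENNReal} (hw : w ≠ 0) :
    ¬ ∀ᶠ i in L, w ≤ (μs i : Measure Ω) F := fun hle =>
  have hlt : ∀ᶠ i in L, (μs i : Measure Ω) F < w :=
    eventually_measure_lt_of_tendsto hμ hF (by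
      rw [coe_mk, Measure.dirac_apply' c hF.measurableSet, Set.indicator_of_notMem hcF]
      exact pos_iff_ne_zero.mpr hw)
  let ⟨_, hle, hlt⟩ := (hle.and hlt).exists
  (hle.trans_lt hlt).false

end MeasureTheory.ProbabilityMeasure

theorem tendsto_dirac_of_forall_integral_tendsto {Ω : Type*} [MeasurableSpace Ω]
    [TopologicalSpace Ω] [OpensMeasurableSpace Ω] [MeasurableSingletonClass Ω]
    (ν : ℕ → Measure Ω) (hprob : ∀ n, IsProbabilityMeasure (ν n)) (c : Ω)
    (hconv : ∀ f : BoundedContinuousFunction Ω ℝ,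
      Tendsto (fun n : ℕ => ∫ x, f x ∂(ν n)) atTop (nhds (f c))) :
    Tendsto (β := ProbabilityMeasure Ω) (fun n => ⟨ν n, hprob n⟩) atTop
      (nhds ⟨Measure.dirac c, inferInstance⟩) := by
  refine ProbabilityMeasure.tendsto_iff_forall_integral_tendsto.mpr fun f => ?_
  simpa only [ProbabilityMeasure.coe_mk, integral_dirac] using hconv f

theorem map_const_mul_apply_Icc (ρ : Measure ℝ) {l : ℝ} (hl : 0 < l) (a b : ℝ) :
    Measure.map (fun x => l * x) ρ (Set.Icc (l * a) (l * b)) = ρ (Set.Icc a b) := by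
  rw [Measure.map_apply (measurable_const_mul l) measurableSet_Icc,
    Set.preimage_const_mul_Icc₀ _ _ hl, mul_div_cancel_left₀ _ hl.ne',
    mul_div_cancel_left₀ _ hl.ne']

section Recursion

variable (q : ℝ) (μ : Measure ℝ) {A B : Set ℝ}

theorem Tq_apply (hA : MeasurableSet A) :
    Tq q μ A = ENNReal.ofReal (1 - q) * (μ.prod μ) (Sfun ⁻¹' A)
      + ENNReal.ofReal q * (μ.prod (μ.prod (μ.prod μ))) (Dfun ⁻¹' A) := by
  have hS : Measurable Sfun := by unfold Sfun; fun_prop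
  have hD : Measurable Dfun := by unfold Dfun; fun_prop
  rw [Tq, Measure.add_apply, Measure.smul_apply, Measure.smul_apply,
    Measure.map_apply hS hA, Measure.map_apply hD hA, smul_eq_mul, smul_eq_mul]

variable [SFinite μ]

theorem ofReal_mul_sq_le_Tq (hA : MeasurableSet A)
    (hS : ∀ x ∈ B, ∀ y ∈ B, x + y ∈ A) :
    ENNReal.ofReal (1 - q) * μ B ^ 2 ≤ Tq q μ A := by
  rw [Tq_apply q μ hA]
  refine le_add_right (mul_le_mul_right ?_ _)
  calc μ B ^ 2 = (μ.prod μ) (B ×ˢ B) := by rw [Measure.prod_prod, sq]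
    _ ≤ (μ.prod μ) (Sfun ⁻¹' A) := measure_mono fun p ⟨hx, hy⟩ => hS _ hx _ hy

theorem ofReal_mul_pow_four_le_Tq (hA : MeasurableSet A)
    (hD : ∀ x₁ ∈ B, ∀ x₂ ∈ B, ∀ x₃ ∈ B, ∀ x₄ ∈ B, Dfun (x₁, x₂, x₃, x₄) ∈ A) :
    ENNReal.ofReal q * μ B ^ 4 ≤ Tq q μ A := by
  rw [Tq_apply q μ hA]
  refine le_add_left (mul_le_mul_right ?_ _)
  calc μ B ^ 4 = (μ.prod (μ.prod (μ.prod μ))) (B ×ˢ (B ×ˢ (B ×ˢ B))) := by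
        rw [Measure.prod_prod, Measure.prod_prod, Measure.prod_prod]; ring
    _ ≤ (μ.prod (μ.prod (μ.prod μ))) (Dfun ⁻¹' A) :=
        measure_mono fun p ⟨h₁, h₂, h₃, h₄⟩ => hD _ h₁ _ h₂ _ h₃ _ h₄

end Recursion

theorem mul_div_add_mem_Icc {a b s t : ℝ} (ha : 0 < a) (hs : s ∈ Set.Icc (2 * a) (2 * b))
    (ht : t ∈ Set.Icc (2 * a) (2 * b)) : s * t / (s + t) ∈ Set.Icc a b := by
  have hst : 0 < s + t := by linarith [hs.1, ht.1]
  constructor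
  · rw [le_div_iff₀ hst]
    nlinarith [mul_le_mul (by linarith [hs.1] : a ≤ s - a) (by linarith [ht.1] : a ≤ t - a)
      ha.le (by linarith [hs.1])]
  · rw [div_le_iff₀ hst]
    nlinarith [sq_nonneg (s - t),
      mul_le_mul_of_nonneg_left (by linarith [hs.2, ht.2] : s + t ≤ 4 * b) hst.le]

theorem Dfun_mem_Icc {a b x₁ x₂ x₃ x₄ : ℝ} (ha : 0 < a) (h₁ : x₁ ∈ Set.Icc a b)
    (h₂ : x₂ ∈ Set.Icc a b) (h₃ : x₃ ∈ Set.Icc a b) (h₄ : x₄ ∈ Set.Icc a b) :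
    Dfun (x₁, x₂, x₃, x₄) ∈ Set.Icc a b := by
  have hsum : ∀ {x y}, x ∈ Set.Icc a b → y ∈ Set.Icc a b → x + y ∈ Set.Icc (2 * a) (2 * b) :=
    fun hx hy => ⟨by linarith [hx.1, hy.1], by linarith [hx.2, hy.2]⟩
  have h := mul_div_add_mem_Icc ha (hsum h₁ h₂) (hsum h₃ h₄)
  rwa [← add_assoc] at h

section ScaledRecursion

variable (q : ℝ) {l : ℝ} (hl : 0 < l) (μ : Measure ℝ) [SFinite μ] {a b : ℝ} {p : ENNReal}
  (hp : p ≤ μ (Set.Icc a b))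
include hl hp

theorem ofReal_mul_sq_le_map_Tq :
    ENNReal.ofReal (1 - q) * p ^ 2 ≤
      Measure.map (fun x => l * x) (Tq q μ) (Set.Icc (l * (2 * a)) (l * (2 * b))) := by
  rw [map_const_mul_apply_Icc _ hl]
  refine (mul_le_mul_right (pow_le_pow_left' hp 2) _).trans
    (ofReal_mul_sq_le_Tq q μ measurableSet_Icc fun x hx y hy => ?_)
  exact ⟨by linarith [hx.1, hy.1], by linarith [hx.2, hy.2]⟩

theorem ofReal_mul_pow_four_le_map_Tq (ha : 0 < a) :
    ENNReal.ofReal q * p ^ 4 ≤ Measure.map (fun x => l * x) (Tq q μ) (Set.Icc (l * a) (l * b)) := by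
  rw [map_const_mul_apply_Icc _ hl]
  exact (mul_le_mul_right (pow_le_pow_left' hp 4) _).trans
    (ofReal_mul_pow_four_le_Tq q μ measurableSet_Icc fun _ h₁ _ h₂ _ h₃ _ h₄ =>
      Dfun_mem_Icc ha h₁ h₂ h₃ h₄)

end ScaledRecursion

theorem stmt4_general (q l : ℝ) (hq : q ∈ Set.Ioo (0 : ℝ) 1) (hl : 0 < l)
    (ν : ℕ → Measure ℝ) (hprob : ∀ n, IsProbabilityMeasure (ν n))
    (hrec : ∀ n, ν (n + 1) = Measure.map (fun x => l * x) (Tq q (ν n)))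
    (c : ℝ) (hc : 0 ≤ c)
    (hconv : ∀ f : BoundedContinuousFunction ℝ ℝ,
      Tendsto (fun n : ℕ => ∫ x, f x ∂(ν n)) atTop (nhds (f c))) :
    c = 0 := by
  by_contra hc0
  have hc_pos : 0 < c := lt_of_le_of_ne hc (Ne.symm hc0)
  have hlim := tendsto_dirac_of_forall_integral_tendsto ν hprob c hconv
  have hmass : ∀ᶠ n in atTop, 2⁻¹ < ν n (Set.Icc (9 / 10 * c) (11 / 10 * c)) := by
    refine (ProbabilityMeasure.eventually_lt_measure_of_tendsto hlim isOpen_Ioo ?_).mono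
      fun n hn => hn.trans_le (measure_mono Set.Ioo_subset_Icc_self)
    rw [ProbabilityMeasure.coe_mk,
      Measure.dirac_apply_of_mem (Set.mem_Ioo.mpr ⟨by linarith, by linarith⟩)]
    norm_num
  have hshift := hlim.comp (tendsto_add_atTop_nat 1)
  have hmiss : c ∉ Set.Icc (l * (9 / 10 * c)) (l * (11 / 10 * c)) ∨
      c ∉ Set.Icc (l * (2 * (9 / 10 * c))) (l * (2 * (11 / 10 * c))) := by
    by_contra! h
    nlinarith [h.1.2, h.2.1]
  rcases hmiss with hcF | hcF
  · refine ProbabilityMeasure.not_eventually_le_measure_of_tendsto_dirac hshift isClosed_Icc hcF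
      (w := ENNReal.ofReal q * 2⁻¹ ^ 4) (by simp [hq.1]) (hmass.mono fun n hn => ?_)
    show _ ≤ ν (n + 1) _
    rw [hrec]
    exact ofReal_mul_pow_four_le_map_Tq q hl _ hn.le (by linarith)
  · refine ProbabilityMeasure.not_eventually_le_measure_of_tendsto_dirac hshift isClosed_Icc hcF
      (w := ENNReal.ofReal (1 - q) * 2⁻¹ ^ 2) (by simp [hq.2]) (hmass.mono fun n hn => ?_)
    show _ ≤ ν (n + 1) _
    rw [hrec]
    exact ofReal_mul_sq_le_map_Tq q hl _ hn.le

theorem stmt4 (q l : ℝ) (hq : q ∈ Set.Ioo (0 : ℝ) 1) (hl : 0 < l)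
    (ν : ℕ → Measure ℝ) (hprob : ∀ n, IsProbabilityMeasure (ν n))
    (hsupp : ∀ n, ν n (Set.Ioi (0 : ℝ))ᶜ = 0)
    (hrec : ∀ n, ν (n + 1) = Measure.map (fun x => l * x) (Tq q (ν n)))
    (c : ℝ) (hc : 0 ≤ c)
    (hconv : ∀ f : BoundedContinuousFunction ℝ ℝ,
      Tendsto (fun n : ℕ => ∫ x, f x ∂(ν n)) atTop (nhds (f c))) :
    c = 0 :=
  stmt4_general q l hq hl ν hprob hrec c hc hconv
end

section
/- Let q ∈ (0,1) and let μ be a Borel probability measure on ℝ supported in [1, C] for some C ≥ 1, which is not degenerate in the sense that (∫ x² dμ)(∫ x^{-1} dμ) > ∫ x dμ. Set ν := T_q μ. Then (∫ z dν)(∫ z^{-1} dν) ≤ ((2−q)(1+q)/2) · [ (∫ x dμ)(∫ x^{-1} dμ) − ((∫ x dμ)(∫ x^{-1} dμ) − 1)² / ( (∫ x² dμ)(∫ x^{-1} dμ)/(∫ x dμ) − 1 ) ]. -/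
open MeasureTheory ProbabilityTheory Filter

set_option maxHeartbeats 8000000

/-- Integrability from an a.e. bound on a finite measure. -/
lemma integrable_of_bdd {α : Type*} [MeasurableSpace α] {m : Measure α} [IsFiniteMeasure m]
    {f : α → ℝ} (hm : AEStronglyMeasurable f m) {c : ℝ} (h : ∀ᵐ x ∂m, |f x| ≤ c) :
    Integrable f m :=
  (integrable_const c).mono' hm (by simpa [Real.norm_eq_abs] using h)

/-- Integral of a function of the first coordinate over a product of probability measures. -/
lemma int_fst_gen {α β : Type*} [MeasurableSpace α] [MeasurableSpace β]
    (m : Measure α) (n : Measure β) [SigmaFinite m] [IsProbabilityMeasure n] (f : α → ℝ) :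
    ∫ p, f p.1 ∂(m.prod n) = ∫ x, f x ∂m := by
  simpa using integral_prod_mul (μ := m) (ν := n) f (fun _ => (1 : ℝ))

/-- Integral of a function of the second coordinate over a product of probability measures. -/
lemma int_snd_gen {α β : Type*} [MeasurableSpace α] [MeasurableSpace β]
    (m : Measure α) (n : Measure β) [IsProbabilityMeasure m] [SigmaFinite n] (f : β → ℝ) :
    ∫ p, f p.2 ∂(m.prod n) = ∫ y, f y ∂n := by
  simpa using integral_prod_mul (μ := m) (ν := n) (fun _ => (1 : ℝ)) f

/-- Cauchy–Schwarz in the form `(∫A)² ≤ (∫ A²/B)·(∫B)` for a.e. nonnegative `A, B`. -/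
lemma cs_div {α : Type*} [MeasurableSpace α] {m : Measure α}
    {A B : α → ℝ} (hA : Integrable A m) (hB : Integrable B m)
    (hU : Integrable (fun x => (A x) ^ 2 / B x) m)
    (hA0 : ∀ᵐ x ∂m, 0 ≤ A x) (hB0 : ∀ᵐ x ∂m, 0 ≤ B x)
    (hzero : ∀ᵐ x ∂m, B x = 0 → A x = 0) :
    (∫ x, A x ∂m) ^ 2 ≤ (∫ x, (A x) ^ 2 / B x ∂m) * (∫ x, B x ∂m) := by
  have hU0 : ∀ᵐ x ∂m, 0 ≤ (A x) ^ 2 / B x := by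
    filter_upwards [hB0] with x hx using div_nonneg (sq_nonneg _) hx
  have hIA : 0 ≤ ∫ x, A x ∂m := integral_nonneg_of_ae hA0
  have hIB : 0 ≤ ∫ x, B x ∂m := integral_nonneg_of_ae hB0
  have hIU : 0 ≤ ∫ x, (A x) ^ 2 / B x ∂m := integral_nonneg_of_ae hU0
  rcases eq_or_lt_of_le hIA with hIA0 | hIApos
  · rw [← hIA0]
    simpa using mul_nonneg hIU hIB
  have hIBpos : 0 < ∫ x, B x ∂m := by
    rcases eq_or_lt_of_le hIB with hIB0 | h
    · exfalso
      have hBz : B =ᵐ[m] 0 := (integral_eq_zero_iff_of_nonneg_ae hB0 hB).1 hIB0.symm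
      have hAz : A =ᵐ[m] 0 := by
        filter_upwards [hBz, hzero] with x h1 h2
        exact h2 h1
      have : (∫ x, A x ∂m) = 0 := by
        rw [integral_congr_ae hAz]; simp
      rw [this] at hIApos
      exact lt_irrefl _ hIApos
    · exact h
  set t : ℝ := (∫ x, A x ∂m) / (∫ x, B x ∂m) with ht
  have htpos : 0 < t := div_pos hIApos hIBpos
  have hpt : ∀ᵐ x ∂m, A x ≤ (A x) ^ 2 / B x / (2 * t) + t * B x / 2 := by
    filter_upwards [hB0, hzero] with x hBx hzx
    rcases eq_or_lt_of_le hBx with hB0x | hBpos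
    · rw [hzx hB0x.symm, ← hB0x]
      simp
    · have key : (A x) ^ 2 / B x / (2 * t) + t * B x / 2 - A x
          = (A x - t * B x) ^ 2 / (2 * t * B x) := by
        field_simp
        ring
      nlinarith [div_nonneg (sq_nonneg (A x - t * B x)) (le_of_lt (by positivity : (0:ℝ) < 2 * t * B x)), key]
  have hint : Integrable (fun x => (A x) ^ 2 / B x / (2 * t) + t * B x / 2) m :=
    (hU.div_const _).add ((hB.const_mul t).div_const 2)
  have hmono := integral_mono_ae hA hint hpt
  rw [integral_add (hU.div_const _) ((hB.const_mul t).div_const 2), integral_div,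
    integral_div, integral_const_mul] at hmono
  have e2 : (∫ x, (A x) ^ 2 / B x ∂m) / (2 * t)
      = (∫ x, (A x) ^ 2 / B x ∂m) * (∫ x, B x ∂m) / (2 * ∫ x, A x ∂m) := by
    rw [ht, ← mul_div_assoc, div_div_eq_mul_div]
  have e1 : t * ∫ x, B x ∂m = ∫ x, A x ∂m := div_mul_cancel₀ _ hIBpos.ne'
  rw [e2, e1] at hmono
  have h3 : (∫ x, A x ∂m) / 2
      ≤ (∫ x, (A x) ^ 2 / B x ∂m) * (∫ x, B x ∂m) / (2 * ∫ x, A x ∂m) := by linarith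
  rw [div_le_div_iff₀ two_pos (by positivity)] at h3
  nlinarith [h3]

/-- Pointwise AM–GM bound for the parallel-series resistance. -/
lemma dfun_le_aux (x1 x2 x3 x4 : ℝ) (h1 : 0 < x1 + x2) (h2 : 0 < x3 + x4) :
    (x1 + x2) * (x3 + x4) / (x1 + x2 + x3 + x4) ≤ (x1 + x2 + x3 + x4) / 4 := by
  rw [div_le_div_iff₀ (by linarith) (by norm_num)]
  nlinarith [sq_nonneg (x1 + x2 - x3 - x4)]

theorem stmt5 (q C : ℝ) (hq : q ∈ Set.Ioo (0 : ℝ) 1) (hC : 1 ≤ C)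
    (μ : Measure ℝ) [IsProbabilityMeasure μ] (hsupp : μ (Set.Icc 1 C)ᶜ = 0)
    (hnondeg : (∫ x, x ^ 2 ∂μ) * (∫ x, x⁻¹ ∂μ) > ∫ x, x ∂μ) :
    (∫ z, z ∂(Tq q μ)) * (∫ z, z⁻¹ ∂(Tq q μ)) ≤
      ((2 - q) * (1 + q) / 2) *
        ((∫ x, x ∂μ) * (∫ x, x⁻¹ ∂μ) -
          ((∫ x, x ∂μ) * (∫ x, x⁻¹ ∂μ) - 1) ^ 2 /
            ((∫ x, x ^ 2 ∂μ) * (∫ x, x⁻¹ ∂μ) / (∫ x, x ∂μ) - 1)) := by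
  obtain ⟨hq0, hq1⟩ := hq
  have hCpos : (0:ℝ) < C := by linarith
  set m1 := ∫ x, x ∂μ with hm1d
  set mi := ∫ x, x⁻¹ ∂μ with hmid
  set m2 := ∫ x, x ^ 2 ∂μ with hm2d
  -- a.e. support bounds
  have hx : ∀ᵐ x ∂μ, 1 ≤ x ∧ x ≤ C := by
    have h : ∀ᵐ x ∂μ, x ∈ Set.Icc 1 C := by
      rw [ae_iff]
      exact hsupp
    filter_upwards [h] with x hx using ⟨hx.1, hx.2⟩
  have h2 : ∀ᵐ p ∂(μ.prod μ), (1 ≤ p.1 ∧ p.1 ≤ C) ∧ (1 ≤ p.2 ∧ p.2 ≤ C) :=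
    (Measure.quasiMeasurePreserving_fst.ae hx).and (Measure.quasiMeasurePreserving_snd.ae hx)
  have h3 : ∀ᵐ p ∂(μ.prod (μ.prod μ)),
      (1 ≤ p.1 ∧ p.1 ≤ C) ∧ ((1 ≤ p.2.1 ∧ p.2.1 ≤ C) ∧ (1 ≤ p.2.2 ∧ p.2.2 ≤ C)) :=
    (Measure.quasiMeasurePreserving_fst.ae hx).and (Measure.quasiMeasurePreserving_snd.ae h2)
  have h4 : ∀ᵐ p ∂(μ.prod (μ.prod (μ.prod μ))),
      (1 ≤ p.1 ∧ p.1 ≤ C) ∧ ((1 ≤ p.2.1 ∧ p.2.1 ≤ C) ∧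
        ((1 ≤ p.2.2.1 ∧ p.2.2.1 ≤ C) ∧ (1 ≤ p.2.2.2 ∧ p.2.2.2 ≤ C))) :=
    (Measure.quasiMeasurePreserving_fst.ae hx).and (Measure.quasiMeasurePreserving_snd.ae h3)
  -- measurability
  have mS : Measurable Sfun := measurable_fst.add measurable_snd
  have mD : Measurable Dfun := by unfold Dfun; fun_prop
  -- basic single-variable integrability
  have ix : Integrable (fun x : ℝ => x) μ :=
    integrable_of_bdd measurable_id.aestronglyMeasurable
      (c := C) (by filter_upwards [hx] with x hx; rw [abs_le]; constructor <;> linarith [hx.1, hx.2])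
  have ixi : Integrable (fun x : ℝ => x⁻¹) μ :=
    integrable_of_bdd measurable_inv.aestronglyMeasurable
      (c := 1) (by
        filter_upwards [hx] with x hx
        have hx0 : (0:ℝ) < x := by linarith [hx.1]
        rw [abs_le]
        constructor
        · have : (0:ℝ) ≤ x⁻¹ := by positivity
          linarith
        · rw [inv_le_one_iff₀]; right; exact hx.1)
  have hm1ge : 1 ≤ m1 := by
    have := integral_mono_ae (integrable_const (1:ℝ)) ix
      (by filter_upwards [hx] with x hx using hx.1)
    simpa using this
  have hm1pos : 0 < m1 := by linarith
  have hmipos : 0 < mi := by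
    have h1 : C⁻¹ ≤ mi := by
      have := integral_mono_ae (integrable_const (C⁻¹:ℝ)) ixi
        (by
          filter_upwards [hx] with x hx
          exact inv_anti₀ (by linarith [hx.1]) hx.2)
      simpa using this
    have : (0:ℝ) < C⁻¹ := by positivity
    linarith
  -- P2 integral computations via product structure
  have e_fst : ∫ p : ℝ × ℝ, p.1 ∂(μ.prod μ) = m1 := by
    simpa using int_fst_gen μ μ (fun x => x)
  have e_snd : ∫ p : ℝ × ℝ, p.2 ∂(μ.prod μ) = m1 := by
    simpa using int_snd_gen μ μ (fun x => x)
  have e_fsti : ∫ p : ℝ × ℝ, p.1⁻¹ ∂(μ.prod μ) = mi := by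
    simpa using int_fst_gen μ μ (fun x => x⁻¹)
  have e_sndi : ∫ p : ℝ × ℝ, p.2⁻¹ ∂(μ.prod μ) = mi := by
    simpa using int_snd_gen μ μ (fun x => x⁻¹)
  have e_xy : ∫ p : ℝ × ℝ, p.1 * p.2⁻¹ ∂(μ.prod μ) = m1 * mi := by
    simpa using integral_prod_mul (μ := μ) (ν := μ) (fun x => x) (fun y => y⁻¹)
  have e_yx : ∫ p : ℝ × ℝ, p.1⁻¹ * p.2 ∂(μ.prod μ) = mi * m1 := by
    simpa using integral_prod_mul (μ := μ) (ν := μ) (fun x => x⁻¹) (fun y => y)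
  have e_x2y : ∫ p : ℝ × ℝ, p.1 ^ 2 * p.2⁻¹ ∂(μ.prod μ) = m2 * mi := by
    simpa using integral_prod_mul (μ := μ) (ν := μ) (fun x => x ^ 2) (fun y => y⁻¹)
  have e_yx2 : ∫ p : ℝ × ℝ, p.1⁻¹ * p.2 ^ 2 ∂(μ.prod μ) = mi * m2 := by
    simpa using integral_prod_mul (μ := μ) (ν := μ) (fun x => x⁻¹) (fun y => y ^ 2)
  -- the key P2 functions
  set A : ℝ × ℝ → ℝ := fun p => (p.1 - p.2) ^ 2 / (2 * p.1 * p.2) with hAdef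
  set B : ℝ × ℝ → ℝ := fun p => (p.1 - p.2) ^ 2 * (p.1 + p.2) / (4 * p.1 * p.2) with hBdef
  set U : ℝ × ℝ → ℝ := fun p => (p.1 - p.2) ^ 2 / (p.1 * p.2 * (p.1 + p.2)) with hUdef
  set b := ∫ p : ℝ × ℝ, (p.1 + p.2)⁻¹ ∂(μ.prod μ) with hbdef
  set IU := ∫ p, U p ∂(μ.prod μ) with hIUdef
  clear_value A B U b IU
  -- integrability over P2
  have mA : Measurable A := by rw [hAdef]; fun_prop
  have mB : Measurable B := by rw [hBdef]; fun_prop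
  have mU : Measurable U := by rw [hUdef]; fun_prop
  have iA : Integrable A (μ.prod μ) := by
    refine integrable_of_bdd mA.aestronglyMeasurable (c := C ^ 2) ?_
    filter_upwards [h2] with p hp
    obtain ⟨⟨ha1, ha2⟩, hb1, hb2⟩ := hp
    have hxy : (1:ℝ) ≤ p.1 * p.2 := by nlinarith
    have hsq : (p.1 - p.2) ^ 2 ≤ C ^ 2 := by
      nlinarith [mul_nonneg (by linarith : (0:ℝ) ≤ C - (p.1 - p.2))
        (by linarith : (0:ℝ) ≤ C + (p.1 - p.2))]
    rw [hAdef, abs_le]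
    constructor
    · have : (0:ℝ) ≤ (p.1 - p.2) ^ 2 / (2 * p.1 * p.2) := by positivity
      nlinarith [sq_nonneg C]
    · rw [div_le_iff₀ (by positivity)]
      nlinarith [sq_nonneg C]
  have iB : Integrable B (μ.prod μ) := by
    refine integrable_of_bdd mB.aestronglyMeasurable (c := C ^ 3) ?_
    filter_upwards [h2] with p hp
    obtain ⟨⟨ha1, ha2⟩, hb1, hb2⟩ := hp
    have hxy : (1:ℝ) ≤ p.1 * p.2 := by nlinarith
    have hsq : (p.1 - p.2) ^ 2 ≤ C ^ 2 := by
      nlinarith [mul_nonneg (by linarith : (0:ℝ) ≤ C - (p.1 - p.2))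
        (by linarith : (0:ℝ) ≤ C + (p.1 - p.2))]
    rw [hBdef, abs_le]
    have hC3 : (0:ℝ) < C ^ 3 := by positivity
    constructor
    · have : (0:ℝ) ≤ (p.1 - p.2) ^ 2 * (p.1 + p.2) / (4 * p.1 * p.2) := by positivity
      linarith
    · rw [div_le_iff₀ (by positivity)]
      have st1 : (p.1 - p.2) ^ 2 * (p.1 + p.2) ≤ C ^ 2 * (p.1 + p.2) :=
        mul_le_mul_of_nonneg_right hsq (by linarith)
      have st2 : C ^ 2 * (p.1 + p.2) ≤ C ^ 2 * (2 * C) :=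
        mul_le_mul_of_nonneg_left (by linarith) (by positivity)
      have st3 : C ^ 3 * 1 ≤ C ^ 3 * (p.1 * p.2) := mul_le_mul_of_nonneg_left hxy (by positivity)
      nlinarith [st1, st2, st3]
  have iU : Integrable U (μ.prod μ) := by
    refine integrable_of_bdd mU.aestronglyMeasurable (c := C ^ 2) ?_
    filter_upwards [h2] with p hp
    obtain ⟨⟨ha1, ha2⟩, hb1, hb2⟩ := hp
    have hxy : (1:ℝ) ≤ p.1 * p.2 := by nlinarith
    have hsq : (p.1 - p.2) ^ 2 ≤ C ^ 2 := by
      nlinarith [mul_nonneg (by linarith : (0:ℝ) ≤ C - (p.1 - p.2))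
        (by linarith : (0:ℝ) ≤ C + (p.1 - p.2))]
    rw [hUdef, abs_le]
    constructor
    · have : (0:ℝ) ≤ (p.1 - p.2) ^ 2 / (p.1 * p.2 * (p.1 + p.2)) := by positivity
      nlinarith [sq_nonneg C]
    · rw [div_le_iff₀ (by positivity)]
      have st3 : C ^ 2 * 1 ≤ C ^ 2 * (p.1 * p.2 * (p.1 + p.2)) :=
        mul_le_mul_of_nonneg_left (by nlinarith) (by positivity)
      nlinarith [st3]
  have ib : Integrable (fun p : ℝ × ℝ => (p.1 + p.2)⁻¹) (μ.prod μ) := by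
    refine integrable_of_bdd (Measurable.aestronglyMeasurable (by fun_prop)) (c := 1) ?_
    filter_upwards [h2] with p hp
    obtain ⟨⟨ha1, ha2⟩, hb1, hb2⟩ := hp
    rw [abs_le]
    constructor
    · have : (0:ℝ) ≤ (p.1 + p.2)⁻¹ := by positivity
      linarith
    · rw [inv_le_one_iff₀]; right; linarith
  have imul : ∀ (f g : ℝ → ℝ), Measurable f → Measurable g → (∀ᵐ x ∂μ, 1 ≤ x ∧ x ≤ C → |f x| ≤ C) →
      (∀ᵐ x ∂μ, 1 ≤ x ∧ x ≤ C → |g x| ≤ C) →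
      Integrable (fun p : ℝ × ℝ => f p.1 * g p.2) (μ.prod μ) := by
    intro f g hf hg hbf hbg
    refine integrable_of_bdd ((hf.comp measurable_fst).mul (hg.comp measurable_snd)).aestronglyMeasurable
      (c := C * C) ?_
    filter_upwards [h2, Measure.quasiMeasurePreserving_fst.ae hbf,
      Measure.quasiMeasurePreserving_snd.ae hbg] with p hp hf1 hg1
    rw [abs_mul]
    exact mul_le_mul (hf1 hp.1) (hg1 hp.2) (abs_nonneg _) (by linarith)
  -- value of ∫ A
  have hAe : A =ᵐ[μ.prod μ] fun p => p.1 * p.2⁻¹ / 2 + p.1⁻¹ * p.2 / 2 - 1 := by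
    filter_upwards [h2] with p hp
    obtain ⟨⟨ha1, _⟩, hb1, _⟩ := hp
    have hx0 : p.1 ≠ 0 := by positivity
    have hy0 : p.2 ≠ 0 := by positivity
    rw [hAdef]
    field_simp
    ring
  have hid_bd : ∀ᵐ x ∂μ, 1 ≤ x ∧ x ≤ C → |x| ≤ C := by
    filter_upwards with x hx
    rw [abs_le]; constructor <;> linarith [hx.1, hx.2]
  have hinv_bd : ∀ᵐ x ∂μ, 1 ≤ x ∧ x ≤ C → |x⁻¹| ≤ C := by
    filter_upwards with x hx
    have hx0 : (0:ℝ) < x := by linarith [hx.1]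
    have h1 : x⁻¹ ≤ 1 := by rw [inv_le_one_iff₀]; right; exact hx.1
    have h0 : (0:ℝ) ≤ x⁻¹ := by positivity
    rw [abs_le]; constructor <;> linarith
  have iP1 : Integrable (fun p : ℝ × ℝ => p.1 * p.2⁻¹) (μ.prod μ) :=
    imul _ _ measurable_id' (by fun_prop) hid_bd hinv_bd
  have iP2 : Integrable (fun p : ℝ × ℝ => p.1⁻¹ * p.2) (μ.prod μ) :=
    imul _ _ (by fun_prop) measurable_id' hinv_bd hid_bd
  have hAint : ∫ p, A p ∂(μ.prod μ) = m1 * mi - 1 := by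
    have j1 : Integrable (fun p : ℝ × ℝ => p.1 * p.2⁻¹ / 2) (μ.prod μ) := iP1.div_const 2
    have j2 : Integrable (fun p : ℝ × ℝ => p.1⁻¹ * p.2 / 2) (μ.prod μ) := iP2.div_const 2
    have j12 : Integrable (fun p : ℝ × ℝ => p.1 * p.2⁻¹ / 2 + p.1⁻¹ * p.2 / 2) (μ.prod μ) :=
      j1.add j2
    rw [integral_congr_ae hAe, integral_sub j12 (integrable_const 1),
      integral_add j1 j2, integral_div, integral_div, e_xy, e_yx, integral_const]
    simp
    ring
  -- value of ∫ B
  have hBe : B =ᵐ[μ.prod μ] fun p => p.1 ^ 2 * p.2⁻¹ / 4 + p.1⁻¹ * p.2 ^ 2 / 4 - p.1 / 4 - p.2 / 4 := by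
    filter_upwards [h2] with p hp
    obtain ⟨⟨ha1, _⟩, hb1, _⟩ := hp
    have hx0 : p.1 ≠ 0 := by positivity
    have hy0 : p.2 ≠ 0 := by positivity
    rw [hBdef]
    field_simp
    ring
  have iQ1 : Integrable (fun p : ℝ × ℝ => p.1 ^ 2 * p.2⁻¹) (μ.prod μ) := by
    refine integrable_of_bdd (Measurable.aestronglyMeasurable (by fun_prop)) (c := C ^ 2) ?_
    filter_upwards [h2] with p hp
    obtain ⟨⟨ha1, ha2⟩, hb1, hb2⟩ := hp
    have hy0 : (0:ℝ) < p.2 := by linarith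
    have h1 : p.2⁻¹ ≤ 1 := by rw [inv_le_one_iff₀]; right; exact hb1
    have h0 : (0:ℝ) ≤ p.2⁻¹ := by positivity
    rw [abs_le]
    have hC2 : (0:ℝ) ≤ C ^ 2 := by positivity
    constructor
    · have : (0:ℝ) ≤ p.1 ^ 2 * p.2⁻¹ := by positivity
      linarith
    · calc p.1 ^ 2 * p.2⁻¹ ≤ p.1 ^ 2 * 1 := mul_le_mul_of_nonneg_left h1 (sq_nonneg _)
        _ = p.1 ^ 2 := mul_one _
        _ ≤ C ^ 2 := pow_le_pow_left₀ (by linarith) ha2 2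
  have iQ2 : Integrable (fun p : ℝ × ℝ => p.1⁻¹ * p.2 ^ 2) (μ.prod μ) := by
    refine integrable_of_bdd (Measurable.aestronglyMeasurable (by fun_prop)) (c := C ^ 2) ?_
    filter_upwards [h2] with p hp
    obtain ⟨⟨ha1, ha2⟩, hb1, hb2⟩ := hp
    have hy0 : (0:ℝ) < p.1 := by linarith
    have h1 : p.1⁻¹ ≤ 1 := by rw [inv_le_one_iff₀]; right; exact ha1
    have h0 : (0:ℝ) ≤ p.1⁻¹ := by positivity
    rw [abs_le]
    have hC2 : (0:ℝ) ≤ C ^ 2 := by positivity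
    constructor
    · have : (0:ℝ) ≤ p.1⁻¹ * p.2 ^ 2 := by positivity
      linarith
    · calc p.1⁻¹ * p.2 ^ 2 ≤ 1 * p.2 ^ 2 := mul_le_mul_of_nonneg_right h1 (sq_nonneg _)
        _ = p.2 ^ 2 := one_mul _
        _ ≤ C ^ 2 := pow_le_pow_left₀ (by linarith) hb2 2
  have ifst : Integrable (fun p : ℝ × ℝ => p.1) (μ.prod μ) := by
    refine integrable_of_bdd measurable_fst.aestronglyMeasurable (c := C) ?_
    filter_upwards [h2] with p hp
    rw [abs_le]; constructor <;> linarith [hp.1.1, hp.1.2]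
  have isnd : Integrable (fun p : ℝ × ℝ => p.2) (μ.prod μ) := by
    refine integrable_of_bdd measurable_snd.aestronglyMeasurable (c := C) ?_
    filter_upwards [h2] with p hp
    rw [abs_le]; constructor <;> linarith [hp.2.1, hp.2.2]
  have hBint : ∫ p, B p ∂(μ.prod μ) = (m2 * mi - m1) / 2 := by
    have j1 : Integrable (fun p : ℝ × ℝ => p.1 ^ 2 * p.2⁻¹ / 4) (μ.prod μ) := iQ1.div_const 4
    have j2 : Integrable (fun p : ℝ × ℝ => p.1⁻¹ * p.2 ^ 2 / 4) (μ.prod μ) := iQ2.div_const 4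
    have j3 : Integrable (fun p : ℝ × ℝ => p.1 / 4) (μ.prod μ) := ifst.div_const 4
    have j4 : Integrable (fun p : ℝ × ℝ => p.2 / 4) (μ.prod μ) := isnd.div_const 4
    have j12 : Integrable (fun p : ℝ × ℝ => p.1 ^ 2 * p.2⁻¹ / 4 + p.1⁻¹ * p.2 ^ 2 / 4) (μ.prod μ) :=
      j1.add j2
    have j123 : Integrable (fun p : ℝ × ℝ => p.1 ^ 2 * p.2⁻¹ / 4 + p.1⁻¹ * p.2 ^ 2 / 4 - p.1 / 4)
        (μ.prod μ) := j12.sub j3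
    rw [integral_congr_ae hBe, integral_sub j123 j4, integral_sub j12 j3,
      integral_add j1 j2, integral_div, integral_div, integral_div, integral_div,
      e_x2y, e_yx2, e_fst, e_snd]
    ring
  -- b in terms of IU
  have hbe : (fun p : ℝ × ℝ => (p.1 + p.2)⁻¹) =ᵐ[μ.prod μ]
      fun p => p.1⁻¹ / 4 + p.2⁻¹ / 4 - U p / 4 := by
    filter_upwards [h2] with p hp
    obtain ⟨⟨ha1, _⟩, hb1, _⟩ := hp
    have hx0 : p.1 ≠ 0 := by positivity
    have hy0 : p.2 ≠ 0 := by positivity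
    have hs0 : p.1 + p.2 ≠ 0 := by positivity
    rw [hUdef]
    field_simp
    ring
  have ifsti : Integrable (fun p : ℝ × ℝ => p.1⁻¹) (μ.prod μ) := by
    refine integrable_of_bdd (Measurable.aestronglyMeasurable (by fun_prop)) (c := 1) ?_
    filter_upwards [h2] with p hp
    have hx0 : (0:ℝ) < p.1 := by linarith [hp.1.1]
    rw [abs_le]
    constructor
    · have : (0:ℝ) ≤ p.1⁻¹ := by positivity
      linarith
    · rw [inv_le_one_iff₀]; right; exact hp.1.1
  have isndi : Integrable (fun p : ℝ × ℝ => p.2⁻¹) (μ.prod μ) := by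
    refine integrable_of_bdd (Measurable.aestronglyMeasurable (by fun_prop)) (c := 1) ?_
    filter_upwards [h2] with p hp
    have hx0 : (0:ℝ) < p.2 := by linarith [hp.2.1]
    rw [abs_le]
    constructor
    · have : (0:ℝ) ≤ p.2⁻¹ := by positivity
      linarith
    · rw [inv_le_one_iff₀]; right; exact hp.2.1
  have hbIU : b = mi / 2 - IU / 4 := by
    have j1 : Integrable (fun p : ℝ × ℝ => p.1⁻¹ / 4) (μ.prod μ) := ifsti.div_const 4
    have j2 : Integrable (fun p : ℝ × ℝ => p.2⁻¹ / 4) (μ.prod μ) := isndi.div_const 4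
    have j3 : Integrable (fun p : ℝ × ℝ => U p / 4) (μ.prod μ) := iU.div_const 4
    have j12 : Integrable (fun p : ℝ × ℝ => p.1⁻¹ / 4 + p.2⁻¹ / 4) (μ.prod μ) := j1.add j2
    rw [hbdef, integral_congr_ae hbe, integral_sub j12 j3, integral_add j1 j2,
      integral_div, integral_div, integral_div, e_fsti, e_sndi, ← hIUdef]
    ring
  -- Cauchy–Schwarz
  have hUeq : U =ᵐ[μ.prod μ] fun p => (A p) ^ 2 / B p := by
    filter_upwards [h2] with p hp
    obtain ⟨⟨ha1, _⟩, hb1, _⟩ := hp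
    rcases eq_or_ne p.1 p.2 with heq | hne
    · simp only [hUdef, hAdef, hBdef]
      simp [heq]
    · have hx0 : p.1 ≠ 0 := by positivity
      have hy0 : p.2 ≠ 0 := by positivity
      have hs0 : p.1 + p.2 ≠ 0 := by positivity
      have hd0 : p.1 - p.2 ≠ 0 := sub_ne_zero.2 hne
      have hd2 : (p.1 - p.2) ^ 2 ≠ 0 := pow_ne_zero _ hd0
      simp only [hUdef, hAdef, hBdef]
      rw [div_pow, div_div_div_eq]
      rw [div_eq_div_iff (by positivity) ?h2]
      · ring
      · exact mul_ne_zero (by positivity) (mul_ne_zero hd2 hs0)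
  have hA0 : ∀ᵐ p ∂(μ.prod μ), 0 ≤ A p := by
    filter_upwards [h2] with p hp
    obtain ⟨⟨ha1, _⟩, hb1, _⟩ := hp
    simp only [hAdef]
    exact div_nonneg (sq_nonneg _)
      (mul_nonneg (mul_nonneg (by norm_num) (by linarith)) (by linarith))
  have hB0 : ∀ᵐ p ∂(μ.prod μ), 0 ≤ B p := by
    filter_upwards [h2] with p hp
    obtain ⟨⟨ha1, _⟩, hb1, _⟩ := hp
    simp only [hBdef]
    exact div_nonneg (mul_nonneg (sq_nonneg _) (by linarith))
      (mul_nonneg (mul_nonneg (by norm_num) (by linarith)) (by linarith))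
  have hzero : ∀ᵐ p ∂(μ.prod μ), B p = 0 → A p = 0 := by
    filter_upwards [h2] with p hp hBz
    obtain ⟨⟨ha1, _⟩, hb1, _⟩ := hp
    simp only [hBdef] at hBz
    simp only [hAdef]
    have hden : (4 : ℝ) * p.1 * p.2 ≠ 0 := by positivity
    rcases div_eq_zero_iff.mp hBz with hnum | hd
    · rcases mul_eq_zero.mp hnum with hsq | hsum
      · rw [hsq, zero_div]
      · exfalso; have : (0:ℝ) < p.1 + p.2 := by linarith
        linarith
    · exact absurd hd hden
  have hCS : (m1 * mi - 1) ^ 2 ≤ IU * ((m2 * mi - m1) / 2) := by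
    have := cs_div iA iB (iU.congr hUeq) hA0 hB0 hzero
    rw [hAint, hBint, integral_congr_ae hUeq.symm, ← hIUdef] at this
    exact this
  -- quadruple product integrals
  have e4_1 : ∫ p : ℝ × ℝ × ℝ × ℝ, p.1 ∂(μ.prod (μ.prod (μ.prod μ))) = m1 := by
    simpa using int_fst_gen μ (μ.prod (μ.prod μ)) (fun x => x)
  have e4_2 : ∫ p : ℝ × ℝ × ℝ × ℝ, p.2.1 ∂(μ.prod (μ.prod (μ.prod μ))) = m1 := by
    have s1 : ∫ p : ℝ × ℝ × ℝ × ℝ, p.2.1 ∂(μ.prod (μ.prod (μ.prod μ)))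
        = ∫ y : ℝ × ℝ × ℝ, y.1 ∂(μ.prod (μ.prod μ)) := by
      simpa using int_snd_gen μ (μ.prod (μ.prod μ)) (fun y : ℝ × ℝ × ℝ => y.1)
    rw [s1]
    simpa using int_fst_gen μ (μ.prod μ) (fun x => x)
  have e4_3 : ∫ p : ℝ × ℝ × ℝ × ℝ, p.2.2.1 ∂(μ.prod (μ.prod (μ.prod μ))) = m1 := by
    have s1 : ∫ p : ℝ × ℝ × ℝ × ℝ, p.2.2.1 ∂(μ.prod (μ.prod (μ.prod μ)))
        = ∫ y : ℝ × ℝ × ℝ, y.2.1 ∂(μ.prod (μ.prod μ)) := by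
      simpa using int_snd_gen μ (μ.prod (μ.prod μ)) (fun y : ℝ × ℝ × ℝ => y.2.1)
    have s2 : ∫ y : ℝ × ℝ × ℝ, y.2.1 ∂(μ.prod (μ.prod μ))
        = ∫ z : ℝ × ℝ, z.1 ∂(μ.prod μ) := by
      simpa using int_snd_gen μ (μ.prod μ) (fun z : ℝ × ℝ => z.1)
    rw [s1, s2, e_fst]
  have e4_4 : ∫ p : ℝ × ℝ × ℝ × ℝ, p.2.2.2 ∂(μ.prod (μ.prod (μ.prod μ))) = m1 := by
    have s1 : ∫ p : ℝ × ℝ × ℝ × ℝ, p.2.2.2 ∂(μ.prod (μ.prod (μ.prod μ)))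
        = ∫ y : ℝ × ℝ × ℝ, y.2.2 ∂(μ.prod (μ.prod μ)) := by
      simpa using int_snd_gen μ (μ.prod (μ.prod μ)) (fun y : ℝ × ℝ × ℝ => y.2.2)
    have s2 : ∫ y : ℝ × ℝ × ℝ, y.2.2 ∂(μ.prod (μ.prod μ))
        = ∫ z : ℝ × ℝ, z.2 ∂(μ.prod μ) := by
      simpa using int_snd_gen μ (μ.prod μ) (fun z : ℝ × ℝ => z.2)
    rw [s1, s2, e_snd]
  have e4_g2 : ∫ p : ℝ × ℝ × ℝ × ℝ, (p.2.2.1 + p.2.2.2)⁻¹ ∂(μ.prod (μ.prod (μ.prod μ))) = b := by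
    have s1 : ∫ p : ℝ × ℝ × ℝ × ℝ, (p.2.2.1 + p.2.2.2)⁻¹ ∂(μ.prod (μ.prod (μ.prod μ)))
        = ∫ y : ℝ × ℝ × ℝ, (y.2.1 + y.2.2)⁻¹ ∂(μ.prod (μ.prod μ)) := by
      simpa using int_snd_gen μ (μ.prod (μ.prod μ)) (fun y : ℝ × ℝ × ℝ => (y.2.1 + y.2.2)⁻¹)
    have s2 : ∫ y : ℝ × ℝ × ℝ, (y.2.1 + y.2.2)⁻¹ ∂(μ.prod (μ.prod μ))
        = ∫ z : ℝ × ℝ, (z.1 + z.2)⁻¹ ∂(μ.prod μ) := by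
      simpa using int_snd_gen μ (μ.prod μ) (fun z : ℝ × ℝ => (z.1 + z.2)⁻¹)
    rw [s1, s2, ← hbdef]
  have ig1 : Integrable (fun p : ℝ × ℝ × ℝ × ℝ => (p.1 + p.2.1)⁻¹) (μ.prod (μ.prod (μ.prod μ))) := by
    refine integrable_of_bdd
      ((measurable_fst.add (measurable_fst.comp measurable_snd)).inv.aestronglyMeasurable)
      (c := 1) ?_
    filter_upwards [h4] with p hp
    obtain ⟨⟨ha1, _⟩, ⟨hb1, _⟩, _⟩ := hp
    have h0 : (0:ℝ) < p.1 + p.2.1 := by linarith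
    rw [abs_le]
    constructor
    · have : (0:ℝ) ≤ (p.1 + p.2.1)⁻¹ := by positivity
      linarith
    · rw [inv_le_one_iff₀]; right; linarith
  have e4_g1 : ∫ p : ℝ × ℝ × ℝ × ℝ, (p.1 + p.2.1)⁻¹ ∂(μ.prod (μ.prod (μ.prod μ))) = b := by
    rw [integral_prod _ ig1]
    have s2 : ∀ x : ℝ, ∫ y : ℝ × ℝ × ℝ, (x + y.1)⁻¹ ∂(μ.prod (μ.prod μ)) = ∫ t, (x + t)⁻¹ ∂μ :=
      fun x => by simpa using int_fst_gen μ (μ.prod μ) (fun t => (x + t)⁻¹)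
    simp_rw [s2]
    rw [hbdef, integral_prod _ ib]
  -- integrability of coordinates on the quadruple product
  have ic1 : Integrable (fun p : ℝ × ℝ × ℝ × ℝ => p.1) (μ.prod (μ.prod (μ.prod μ))) := by
    refine integrable_of_bdd measurable_fst.aestronglyMeasurable (c := C) ?_
    filter_upwards [h4] with p hp
    rw [abs_le]; constructor <;> linarith [hp.1.1, hp.1.2]
  have ic2 : Integrable (fun p : ℝ × ℝ × ℝ × ℝ => p.2.1) (μ.prod (μ.prod (μ.prod μ))) := by
    refine integrable_of_bdd (measurable_fst.comp measurable_snd).aestronglyMeasurable (c := C) ?_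
    filter_upwards [h4] with p hp
    rw [abs_le]; constructor <;> linarith [hp.2.1.1, hp.2.1.2]
  have ic3 : Integrable (fun p : ℝ × ℝ × ℝ × ℝ => p.2.2.1) (μ.prod (μ.prod (μ.prod μ))) := by
    refine integrable_of_bdd
      ((measurable_fst.comp (measurable_snd.comp measurable_snd)).aestronglyMeasurable) (c := C) ?_
    filter_upwards [h4] with p hp
    rw [abs_le]; constructor <;> linarith [hp.2.2.1.1, hp.2.2.1.2]
  have ic4 : Integrable (fun p : ℝ × ℝ × ℝ × ℝ => p.2.2.2) (μ.prod (μ.prod (μ.prod μ))) := by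
    refine integrable_of_bdd
      ((measurable_snd.comp (measurable_snd.comp measurable_snd)).aestronglyMeasurable) (c := C) ?_
    filter_upwards [h4] with p hp
    rw [abs_le]; constructor <;> linarith [hp.2.2.2.1, hp.2.2.2.2]
  -- the D-part integrals
  have iD : Integrable (fun p => Dfun p) (μ.prod (μ.prod (μ.prod μ))) := by
    refine integrable_of_bdd mD.aestronglyMeasurable (c := C ^ 2) ?_
    filter_upwards [h4] with p hp
    obtain ⟨⟨ha1, ha2⟩, ⟨hb1, hb2⟩, ⟨hc1, hc2⟩, hd1, hd2⟩ := hp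
    have hs : (0:ℝ) < p.1 + p.2.1 := by linarith
    have ht : (0:ℝ) < p.2.2.1 + p.2.2.2 := by linarith
    have hsum : (0:ℝ) < p.1 + p.2.1 + p.2.2.1 + p.2.2.2 := by linarith
    simp only [Dfun]
    rw [abs_le]
    constructor
    · have h0 : (0:ℝ) ≤ ((p.1 + p.2.1) * (p.2.2.1 + p.2.2.2)) / (p.1 + p.2.1 + p.2.2.1 + p.2.2.2) :=
        div_nonneg (mul_nonneg hs.le ht.le) hsum.le
      have hC2 : (0:ℝ) ≤ C ^ 2 := by positivity
      linarith
    · rw [div_le_iff₀ hsum]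
      have k1 : (p.1 + p.2.1) * (p.2.2.1 + p.2.2.2) ≤ (2 * C) * (2 * C) :=
        mul_le_mul (by linarith) (by linarith) ht.le (by linarith)
      have k2 : C ^ 2 * 4 ≤ C ^ 2 * (p.1 + p.2.1 + p.2.2.1 + p.2.2.2) :=
        mul_le_mul_of_nonneg_left (by linarith) (by positivity)
      linarith [k1, k2]
  have hDle : ∀ᵐ p ∂(μ.prod (μ.prod (μ.prod μ))),
      Dfun p ≤ (p.1 + p.2.1 + p.2.2.1 + p.2.2.2) / 4 := by
    filter_upwards [h4] with p hp
    obtain ⟨⟨ha1, ha2⟩, ⟨hb1, hb2⟩, ⟨hc1, hc2⟩, hd1, hd2⟩ := hp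
    have hsum : (0:ℝ) < p.1 + p.2.1 + p.2.2.1 + p.2.2.2 := by linarith
    simp only [Dfun]
    exact dfun_le_aux _ _ _ _ (by linarith) (by linarith)
  have hED : ∫ p, Dfun p ∂(μ.prod (μ.prod (μ.prod μ))) ≤ m1 := by
    have j12 : Integrable (fun p : ℝ × ℝ × ℝ × ℝ => p.1 + p.2.1) (μ.prod (μ.prod (μ.prod μ))) :=
      ic1.add ic2
    have j123 : Integrable (fun p : ℝ × ℝ × ℝ × ℝ => p.1 + p.2.1 + p.2.2.1)
        (μ.prod (μ.prod (μ.prod μ))) := j12.add ic3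
    have j1234 : Integrable (fun p : ℝ × ℝ × ℝ × ℝ => p.1 + p.2.1 + p.2.2.1 + p.2.2.2)
        (μ.prod (μ.prod (μ.prod μ))) := j123.add ic4
    have h := integral_mono_ae iD (j1234.div_const 4) hDle
    rw [integral_div, integral_add j123 ic4, integral_add j12 ic3, integral_add ic1 ic2,
      e4_1, e4_2, e4_3, e4_4] at h
    linarith
  have ig2 : Integrable (fun p : ℝ × ℝ × ℝ × ℝ => (p.2.2.1 + p.2.2.2)⁻¹)
      (μ.prod (μ.prod (μ.prod μ))) := by
    refine integrable_of_bdd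
      (((measurable_fst.comp (measurable_snd.comp measurable_snd)).add
        (measurable_snd.comp (measurable_snd.comp measurable_snd))).inv.aestronglyMeasurable)
      (c := 1) ?_
    filter_upwards [h4] with p hp
    obtain ⟨_, _, ⟨hc1, _⟩, hd1, _⟩ := hp
    have h0 : (0:ℝ) < p.2.2.1 + p.2.2.2 := by linarith
    rw [abs_le]
    constructor
    · have : (0:ℝ) ≤ (p.2.2.1 + p.2.2.2)⁻¹ := by positivity
      linarith
    · rw [inv_le_one_iff₀]; right; linarith
  have hDinv_eq : (fun p => (Dfun p)⁻¹) =ᵐ[μ.prod (μ.prod (μ.prod μ))]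
      fun p => (p.1 + p.2.1)⁻¹ + (p.2.2.1 + p.2.2.2)⁻¹ := by
    filter_upwards [h4] with p hp
    obtain ⟨⟨ha1, _⟩, ⟨hb1, _⟩, ⟨hc1, _⟩, hd1, _⟩ := hp
    have hs : (0:ℝ) < p.1 + p.2.1 := by linarith
    have ht : (0:ℝ) < p.2.2.1 + p.2.2.2 := by linarith
    simp only [Dfun]
    rw [inv_div]
    rw [div_eq_iff (by positivity)]
    field_simp
    ring
  have iDinv : Integrable (fun p => (Dfun p)⁻¹) (μ.prod (μ.prod (μ.prod μ))) :=
    (ig1.add ig2).congr hDinv_eq.symm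
  have hEDinv : ∫ p, (Dfun p)⁻¹ ∂(μ.prod (μ.prod (μ.prod μ))) = 2 * b := by
    rw [integral_congr_ae hDinv_eq, integral_add ig1 ig2, e4_g1, e4_g2]
    ring
  -- the S-part integrals
  have hSfun : (fun p : ℝ × ℝ => Sfun p) = fun p : ℝ × ℝ => p.1 + p.2 := rfl
  have iS : Integrable (fun p => Sfun p) (μ.prod μ) := by
    rw [hSfun]; exact ifst.add isnd
  have hSfuni : (fun p : ℝ × ℝ => (Sfun p)⁻¹) = fun p : ℝ × ℝ => (p.1 + p.2)⁻¹ := rfl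
  have iSi : Integrable (fun p => (Sfun p)⁻¹) (μ.prod μ) := by
    rw [hSfuni]; exact ib
  have hSint : ∫ p, Sfun p ∂(μ.prod μ) = 2 * m1 := by
    rw [hSfun, integral_add ifst isnd, e_fst, e_snd]; ring
  have hSiint : ∫ p, (Sfun p)⁻¹ ∂(μ.prod μ) = b := by
    rw [hSfuni, ← hbdef]
  -- integration against Tq q μ
  have hTq : ∀ f : ℝ → ℝ, Measurable f → Integrable (fun p => f (Sfun p)) (μ.prod μ) →
      Integrable (fun p => f (Dfun p)) (μ.prod (μ.prod (μ.prod μ))) →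
      ∫ z, f z ∂(Tq q μ)
        = (1 - q) * ∫ p, f (Sfun p) ∂(μ.prod μ)
          + q * ∫ p, f (Dfun p) ∂(μ.prod (μ.prod (μ.prod μ))) := by
    intro f hf hi1 hi2
    have e1 : ∫ z, f z ∂(Measure.map Sfun (μ.prod μ)) = ∫ p, f (Sfun p) ∂(μ.prod μ) :=
      integral_map mS.aemeasurable hf.aestronglyMeasurable
    have e2 : ∫ z, f z ∂(Measure.map Dfun (μ.prod (μ.prod (μ.prod μ))))
        = ∫ p, f (Dfun p) ∂(μ.prod (μ.prod (μ.prod μ))) :=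
      integral_map mD.aemeasurable hf.aestronglyMeasurable
    have j1 : Integrable f (Measure.map Sfun (μ.prod μ)) :=
      (integrable_map_measure hf.aestronglyMeasurable mS.aemeasurable).2 hi1
    have j2 : Integrable f (Measure.map Dfun (μ.prod (μ.prod (μ.prod μ)))) :=
      (integrable_map_measure hf.aestronglyMeasurable mD.aemeasurable).2 hi2
    rw [Tq, integral_add_measure (j1.smul_measure ENNReal.ofReal_ne_top)
        (j2.smul_measure ENNReal.ofReal_ne_top),
      integral_smul_measure, integral_smul_measure, e1, e2,
      ENNReal.toReal_ofReal (by linarith : (0:ℝ) ≤ 1 - q), ENNReal.toReal_ofReal hq0.le,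
      smul_eq_mul, smul_eq_mul]
  have hI1 : ∫ z, z ∂(Tq q μ)
      = (1 - q) * (2 * m1) + q * ∫ p, Dfun p ∂(μ.prod (μ.prod (μ.prod μ))) := by
    have h := hTq (fun z => z) measurable_id iS iD
    simpa [hSint] using h
  have hI2 : ∫ z, z⁻¹ ∂(Tq q μ) = (1 + q) * b := by
    have h := hTq (fun z => z⁻¹) measurable_inv iSi iDinv
    rw [hSiint, hEDinv] at h
    rw [h]; ring
  -- final assembly
  have hb0 : 0 ≤ b := by
    rw [hbdef]
    apply integral_nonneg_of_ae
    filter_upwards [h2] with p hp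
    have h0 : (0:ℝ) < p.1 + p.2 := by linarith [hp.1.1, hp.2.1]
    positivity
  have hI1le : ∫ z, z ∂(Tq q μ) ≤ (2 - q) * m1 := by
    rw [hI1]
    have h := mul_le_mul_of_nonneg_left hED hq0.le
    linarith [h]
  have hD0 : (0:ℝ) < m2 * mi - m1 := sub_pos.2 hnondeg
  have hKrw : (m1 * mi - 1) ^ 2 / (m2 * mi / m1 - 1)
      = (m1 * mi - 1) ^ 2 * m1 / (m2 * mi - m1) := by
    rw [div_sub_one hm1pos.ne', div_div_eq_mul_div]
  have hK : (m1 * mi - 1) ^ 2 * m1 / (m2 * mi - m1) ≤ m1 * IU / 2 := by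
    rw [div_le_iff₀ hD0]
    have h := mul_le_mul_of_nonneg_left hCS hm1pos.le
    linarith [h]
  calc (∫ z, z ∂(Tq q μ)) * (∫ z, z⁻¹ ∂(Tq q μ))
      ≤ ((2 - q) * m1) * ((1 + q) * b) := by
        rw [hI2]
        exact mul_le_mul_of_nonneg_right hI1le (mul_nonneg (by linarith) hb0)
    _ ≤ ((2 - q) * (1 + q) / 2) *
          (m1 * mi - (m1 * mi - 1) ^ 2 / (m2 * mi / m1 - 1)) := by
        rw [hKrw, hbIU]
        have hfac : (0:ℝ) ≤ (2 - q) * (1 + q) :=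
          mul_nonneg (by linarith) (by linarith)
        have h := mul_le_mul_of_nonneg_left hK hfac
        linarith [h]
end

section
/- Let (R_n)_{n≥0} be random variables on a probability space with 1 ≤ R_n ≤ 2^n almost surely for every n. Suppose there are constants M < ∞ and α ∈ ℝ such that E[R_n]·E[1/R_n] ≤ M for all n ≥ 1 and (1/n)·log E[R_n] → α as n → ∞. Then (1/n)·log R_n → α almost surely, and (1/n)·E[log R_n] → α. -/
/-!
Write `a n = E[R n]` and `b n = E[(R n)⁻¹]`. Jensen's inequality for the logarithm, applied to
`R n` and to `(R n)⁻¹`, gives `-log (b n) ≤ E[log (R n)] ≤ log (a n)`, and `a n * b n ≤ M` makes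
the two bounds differ by at most `log M = o(n)`. For the almost sure statement, Markov's
inequality gives `P(R n ≥ exp (ε n) * a n) ≤ exp (-ε n)`, and likewise for `(R n)⁻¹`; these
bounds are summable, so by Borel–Cantelli `log (R n ω)` eventually lies between the same two
bounds up to `ε n`, almost surely.
-/

open MeasureTheory Filter Topology

section
variable {Ω : Type*} [MeasurableSpace Ω] {P : Measure Ω}

theorem integrable_comp_of_ae_mem_Icc [IsFiniteMeasure P] {X : Ω → ℝ} {f : ℝ → ℝ} {a b : ℝ}
    (hX : Measurable X) (hf : Measurable f) (hfc : ContinuousOn f (Set.Icc a b))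
    (hXab : ∀ᵐ ω ∂P, X ω ∈ Set.Icc a b) :
    Integrable (fun ω => f (X ω)) P := by
  obtain ⟨C, hC⟩ := isCompact_Icc.exists_bound_of_continuousOn hfc
  exact .of_bound (hf.comp hX).aestronglyMeasurable C (hXab.mono fun ω h => hC _ h)

theorem integral_pos_of_ae_pos [NeZero P] {X : Ω → ℝ} (hpos : ∀ᵐ ω ∂P, 0 < X ω)
    (hX : Integrable X P) : 0 < ∫ ω, X ω ∂P := by
  rw [integral_pos_iff_support_of_nonneg_ae (hpos.mono fun ω h => h.le) hX]
  calc 0 < P Set.univ := Measure.measure_univ_pos.mpr (NeZero.ne P)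
    _ = P {ω | 0 < X ω} := (measure_congr (ae_eq_univ.mpr hpos)).symm
    _ ≤ P (Function.support X) := measure_mono fun ω h => ne_of_gt h

theorem measure_le_integral_div [IsFiniteMeasure P] {X : Ω → ℝ} (hnn : 0 ≤ᵐ[P] X)
    (hX : Integrable X P) {t : ℝ} (ht : 0 < t) :
    P {ω | t ≤ X ω} ≤ ENNReal.ofReal ((∫ ω, X ω ∂P) / t) := by
  rw [← ofReal_measureReal]
  gcongr
  rw [le_div_iff₀ ht, mul_comm]
  exact mul_meas_ge_le_integral_of_nonneg hnn hX t

theorem log_integral_add_log_integral_inv_le [NeZero P] {X : Ω → ℝ} (hpos : ∀ᵐ ω ∂P, 0 < X ω)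
    (hX : Integrable X P) (hX_inv : Integrable (fun ω => (X ω)⁻¹) P) {M : ℝ}
    (hM : (∫ ω, X ω ∂P) * (∫ ω, (X ω)⁻¹ ∂P) ≤ M) :
    Real.log (∫ ω, X ω ∂P) + Real.log (∫ ω, (X ω)⁻¹ ∂P) ≤ Real.log M := by
  have ha := integral_pos_of_ae_pos hpos hX
  have hb := integral_pos_of_ae_pos (hpos.mono fun ω h => inv_pos.mpr h) hX_inv
  rw [← Real.log_mul ha.ne' hb.ne']
  exact Real.log_le_log (mul_pos ha hb) hM

variable [IsProbabilityMeasure P]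

theorem integral_log_le_log_integral {X : Ω → ℝ} (hpos : ∀ᵐ ω ∂P, 0 < X ω)
    (hX : Integrable X P) (hlog : Integrable (fun ω => Real.log (X ω)) P) :
    ∫ ω, Real.log (X ω) ∂P ≤ Real.log (∫ ω, X ω ∂P) := by
  set m := ∫ ω, X ω ∂P
  have hm : 0 < m := integral_pos_of_ae_pos hpos hX
  have htangent : ∀ᵐ ω ∂P, Real.log (X ω) ≤ (Real.log m - 1) + X ω / m := by
    filter_upwards [hpos] with ω hω
    have := Real.log_le_sub_one_of_pos (div_pos hω hm)
    rw [Real.log_div hω.ne' hm.ne'] at this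
    linarith
  calc ∫ ω, Real.log (X ω) ∂P ≤ ∫ ω, (Real.log m - 1) + X ω / m ∂P :=
        integral_mono_ae hlog ((integrable_const _).add (hX.div_const m)) htangent
    _ = Real.log m := by
      rw [integral_add (integrable_const _) (hX.div_const m), integral_div, div_self hm.ne']
      simp

theorem neg_integral_log_le_log_integral_inv {X : Ω → ℝ} (hpos : ∀ᵐ ω ∂P, 0 < X ω)
    (hX : Integrable (fun ω => (X ω)⁻¹) P) (hlog : Integrable (fun ω => Real.log (X ω)) P) :
    -∫ ω, Real.log (X ω) ∂P ≤ Real.log (∫ ω, (X ω)⁻¹ ∂P) := by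
  have := integral_log_le_log_integral (hpos.mono fun ω h => inv_pos.mpr h) hX
    (by simpa only [Real.log_inv] using hlog.fun_neg)
  simpa only [Real.log_inv, integral_neg] using this

theorem ae_eventually_log_le_log_integral_add {X : ℕ → Ω → ℝ}
    (hpos : ∀ n, ∀ᵐ ω ∂P, 0 < X n ω) (hX : ∀ n, Integrable (X n) P) {ε : ℝ} (hε : 0 < ε) :
    ∀ᵐ ω ∂P, ∀ᶠ n in atTop, Real.log (X n ω) ≤ Real.log (∫ ω, X n ω ∂P) + ε * n := by
  set m : ℕ → ℝ := fun n => ∫ ω, X n ω ∂P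
  have hm : ∀ n, 0 < m n := fun n => integral_pos_of_ae_pos (hpos n) (hX n)
  have hthreshold : ∀ n : ℕ, 0 < Real.exp (ε * n) * m n := fun n =>
    mul_pos (Real.exp_pos _) (hm n)
  have hmarkov : ∀ n : ℕ,
      P {ω | Real.exp (ε * n) * m n ≤ X n ω} ≤ ENNReal.ofReal (Real.exp (-ε) ^ n) := fun n => by
    refine (measure_le_integral_div ((hpos n).mono fun ω h => h.le) (hX n)
      (hthreshold n)).trans ?_
    rw [div_mul_cancel_right₀ (hm n).ne', ← Real.exp_neg, ← Real.exp_nat_mul, mul_neg, mul_comm]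
  have hsum : ∑' n : ℕ, P {ω | Real.exp (ε * n) * m n ≤ X n ω} ≠ ⊤ :=
    ne_top_of_le_ne_top (summable_geometric_of_lt_one (Real.exp_nonneg _)
      (Real.exp_lt_one_iff.mpr (neg_lt_zero.mpr hε))).tsum_ofReal_ne_top
      (ENNReal.tsum_le_tsum hmarkov)
  filter_upwards [ae_eventually_notMem hsum, ae_all_iff.mpr hpos] with ω hω hposω
  filter_upwards [hω] with n hn
  calc Real.log (X n ω) ≤ Real.log (Real.exp (ε * n) * m n) :=
        Real.log_le_log (hposω n) (not_le.mp hn).le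
    _ = Real.log (m n) + ε * n := by
      rw [Real.log_mul (Real.exp_pos _).ne' (hm n).ne', Real.log_exp, add_comm]

theorem ae_forall_pos_eventually_log_le_log_integral_add {X : ℕ → Ω → ℝ}
    (hpos : ∀ n, ∀ᵐ ω ∂P, 0 < X n ω) (hX : ∀ n, Integrable (X n) P) :
    ∀ᵐ ω ∂P, ∀ ε > 0, ∀ᶠ n in atTop,
      Real.log (X n ω) ≤ Real.log (∫ ω, X n ω ∂P) + ε * n := by
  have hrates := ae_all_iff.mpr fun k : ℕ =>
    ae_eventually_log_le_log_integral_add hpos hX (Nat.one_div_pos_of_nat (n := k))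
  filter_upwards [hrates] with ω hω ε hε
  obtain ⟨k, hk⟩ := exists_nat_one_div_lt hε
  filter_upwards [hω k] with n hn
  nlinarith [(n.cast_nonneg : (0:ℝ) ≤ n)]
end

theorem tendsto_inv_mul_of_forall_eventually_le {x A B : ℕ → ℝ} {C α : ℝ}
    (hA : Tendsto (fun n : ℕ => (1 / (n : ℝ)) * A n) atTop (𝓝 α))
    (hAB : ∀ᶠ n in atTop, A n + B n ≤ C)
    (hxA : ∀ ε > 0, ∀ᶠ n in atTop, x n ≤ A n + ε * n)
    (hxB : ∀ ε > 0, ∀ᶠ n in atTop, -x n ≤ B n + ε * n) :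
    Tendsto (fun n : ℕ => (1 / (n : ℝ)) * x n) atTop (𝓝 α) := by
  have hC : Tendsto (fun n : ℕ => (1 / (n : ℝ)) * C) atTop (𝓝 0) := by
    simpa using tendsto_one_div_atTop_nhds_zero_nat.mul_const C
  have hscale : ∀ {n : ℕ}, 0 < n → ∀ y ε : ℝ,
      (1 / (n : ℝ)) * (y + ε * n) = (1 / (n : ℝ)) * y + ε := fun hn y ε => by field_simp
  refine tendsto_order.2 ⟨fun β hβ => ?_, fun β hβ => ?_⟩
  · have hε : 0 < (α - β) / 3 := by linarith
    filter_upwards [hA.eventually (lt_mem_nhds (show α - (α - β) / 3 < α by linarith)),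
      hC.eventually (gt_mem_nhds hε), hAB, hxB _ hε, eventually_gt_atTop 0]
      with n hAn hCn hABn hxn hn
    have hx : A n - C + (-((α - β) / 3)) * n ≤ x n := by linarith
    have := mul_le_mul_of_nonneg_left hx (one_div_nonneg.mpr n.cast_nonneg)
    rw [hscale hn, mul_sub] at this
    linarith
  · have hε : 0 < (β - α) / 2 := by linarith
    filter_upwards [hA.eventually (gt_mem_nhds (show α < α + (β - α) / 2 by linarith)),
      hxA _ hε, eventually_gt_atTop 0] with n hAn hxn hn
    have := mul_le_mul_of_nonneg_left hxn (one_div_nonneg.mpr n.cast_nonneg)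
    rw [hscale hn] at this
    linarith

theorem stmt6 {Ω : Type} [MeasurableSpace Ω] (P : Measure Ω) [IsProbabilityMeasure P]
    (R : ℕ → Ω → ℝ) (hmeas : ∀ n, Measurable (R n))
    (hbound : ∀ n, ∀ᵐ ω ∂P, 1 ≤ R n ω ∧ R n ω ≤ 2 ^ n)
    (M α : ℝ)
    (hM : ∀ n : ℕ, 1 ≤ n → (∫ ω, R n ω ∂P) * (∫ ω, (R n ω)⁻¹ ∂P) ≤ M)
    (hα : Tendsto (fun n : ℕ => (1 / (n : ℝ)) * Real.log (∫ ω, R n ω ∂P)) atTop (nhds α)) :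
    (∀ᵐ ω ∂P, Tendsto (fun n : ℕ => (1 / (n : ℝ)) * Real.log (R n ω)) atTop (nhds α)) ∧
    Tendsto (fun n : ℕ => (1 / (n : ℝ)) * ∫ ω, Real.log (R n ω) ∂P) atTop (nhds α) := by
  have hpos : ∀ n, ∀ᵐ ω ∂P, 0 < R n ω := fun n =>
    (hbound n).mono fun ω h => one_pos.trans_le h.1
  have hpos_inv : ∀ n, ∀ᵐ ω ∂P, 0 < (R n ω)⁻¹ := fun n =>
    (hpos n).mono fun ω h => inv_pos.mpr h
  have hIcc_ne_zero : ∀ n, ∀ x ∈ Set.Icc (1 : ℝ) (2 ^ n), x ≠ 0 := fun n x hx =>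
    (one_pos.trans_le hx.1).ne'
  have hint : ∀ n, Integrable (R n) P := fun n =>
    integrable_comp_of_ae_mem_Icc (f := id) (hmeas n) measurable_id continuousOn_id (hbound n)
  have hint_inv : ∀ n, Integrable (fun ω => (R n ω)⁻¹) P := fun n =>
    integrable_comp_of_ae_mem_Icc (hmeas n) measurable_inv
      (continuousOn_inv₀.mono (hIcc_ne_zero n)) (hbound n)
  have hint_log : ∀ n, Integrable (fun ω => Real.log (R n ω)) P := fun n =>
    integrable_comp_of_ae_mem_Icc (hmeas n) Real.measurable_log
      (Real.continuousOn_log.mono (hIcc_ne_zero n)) (hbound n)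
  have hAB : ∀ᶠ n in atTop,
      Real.log (∫ ω, R n ω ∂P) + Real.log (∫ ω, (R n ω)⁻¹ ∂P) ≤ Real.log M :=
    (eventually_ge_atTop 1).mono fun n hn =>
      log_integral_add_log_integral_inv_le (hpos n) (hint n) (hint_inv n) (hM n hn)
  refine ⟨?_, tendsto_inv_mul_of_forall_eventually_le hα hAB (fun ε hε => ?_) (fun ε hε => ?_)⟩
  · filter_upwards [ae_forall_pos_eventually_log_le_log_integral_add hpos hint,
      ae_forall_pos_eventually_log_le_log_integral_add hpos_inv hint_inv] with ω hup hlo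
    exact tendsto_inv_mul_of_forall_eventually_le hα hAB hup fun ε hε => by
      simpa only [Real.log_inv] using hlo ε hε
  · exact .of_forall fun n => le_add_of_le_of_nonneg
      (integral_log_le_log_integral (hpos n) (hint n) (hint_log n)) (by positivity)
  · exact .of_forall fun n => le_add_of_le_of_nonneg
      (neg_integral_log_le_log_integral_inv (hpos n) (hint_inv n) (hint_log n)) (by positivity)
end

section
/- Let X and Y be independent, identically distributed random variables taking values in [1, C] for some constant C ≥ 1, and suppose E[X²]·E[1/X] > E[X]. Then E[X] · E[(X−Y)²/(X·Y·(X+Y))] ≥ 2·(E[X]·E[1/X] − 1)² / ( E[X²]·E[1/X]/E[X] − 1 ). -/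
open MeasureTheory ProbabilityTheory Set

/-!
Write `F = (X - Y)² / (X Y (X + Y))`. Since `F (X + Y) = X/Y + Y/X - 2` and
`F (X + Y)² = X²/Y + Y²/X - X - Y`, independence and identical distribution give
`E[F (X + Y)] = 2 (E[X] E[1/X] - 1)` and `E[F (X + Y)²] = 2 (E[X²] E[1/X] - E[X])`.
The Cauchy–Schwarz inequality for the weight `F ≥ 0`,
`E[F (X + Y)]² ≤ E[F] · E[F (X + Y)²]`, then rearranges to the claimed bound.
-/

theorem sq_integral_mul_le_integral_mul_integral_mul_sq {α : Type*} [MeasurableSpace α]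
    {μ : Measure α} {f g : α → ℝ} (hf : 0 ≤ᵐ[μ] f) (hf_int : Integrable f μ)
    (hfg : Integrable (fun x => f x * g x) μ) (hfg2 : Integrable (fun x => f x * g x ^ 2) μ) :
    (∫ x, f x * g x ∂μ) ^ 2 ≤ (∫ x, f x ∂μ) * ∫ x, f x * g x ^ 2 ∂μ := by
  have hquad : ∀ t : ℝ, 0 ≤ (∫ x, f x * g x ^ 2 ∂μ) * (t * t)
      + (-2 * ∫ x, f x * g x ∂μ) * t + ∫ x, f x ∂μ := by
    intro t
    have hexpand : (fun x => f x * (t * g x - 1) ^ 2) =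
        fun x => t ^ 2 * (f x * g x ^ 2) - 2 * t * (f x * g x) + f x := by
      ext x; ring
    have hnonneg : 0 ≤ ∫ x, f x * (t * g x - 1) ^ 2 ∂μ :=
      integral_nonneg_of_ae (hf.mono fun x hx => mul_nonneg hx (sq_nonneg _))
    have hint : Integrable (fun x => t ^ 2 * (f x * g x ^ 2) - 2 * t * (f x * g x)) μ :=
      (hfg2.const_mul _).sub (hfg.const_mul _)
    rw [hexpand, integral_add hint hf_int, integral_sub (hfg2.const_mul _) (hfg.const_mul _),
      integral_const_mul, integral_const_mul] at hnonneg
    linarith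
  have hdisc := discrim_le_zero hquad
  rw [discrim] at hdisc
  linarith

theorem integrable_comp_of_ae_mem_of_continuousOn {Ω E : Type*} [MeasurableSpace Ω]
    {P : Measure Ω} [IsFiniteMeasure P] [TopologicalSpace E] [MeasurableSpace E]
    {Z : Ω → E} {K : Set E} {h : E → ℝ} (hZ : AEMeasurable Z P) (hK : IsCompact K)
    (hZK : ∀ᵐ ω ∂P, Z ω ∈ K) (hh : Measurable h) (hc : ContinuousOn h K) :
    Integrable (fun ω => h (Z ω)) P := by
  obtain ⟨B, hB⟩ := hK.exists_bound_of_continuousOn hc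
  exact Integrable.of_bound (hh.comp_aemeasurable hZ).aestronglyMeasurable B
    (hZK.mono fun ω hω => hB _ hω)

theorem integral_comp_mul_comp_of_indepFun_of_identDistrib {Ω E : Type*} [MeasurableSpace Ω]
    [MeasurableSpace E] {P : Measure Ω} {X Y : Ω → E} (hindep : IndepFun X Y P)
    (hid : IdentDistrib X Y P P) {φ ψ : E → ℝ} (hφ : Measurable φ) (hψ : Measurable ψ) :
    ∫ ω, φ (X ω) * ψ (Y ω) ∂P = (∫ ω, φ (X ω) ∂P) * ∫ ω, ψ (X ω) ∂P :=
  ((hindep.comp hφ hψ).integral_fun_mul_eq_mul_integral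
    (hφ.comp_aemeasurable hid.aemeasurable_fst).aestronglyMeasurable
    (hψ.comp_aemeasurable hid.aemeasurable_snd).aestronglyMeasurable).trans
    (congrArg _ (hid.comp hψ).integral_eq.symm)

section PositiveBounded

variable {Ω : Type*} [MeasurableSpace Ω] {P : Measure Ω} {X Y : Ω → ℝ} {m M : ℝ}

theorem integrable_comp_prodMk_of_ae_mem_Icc [IsFiniteMeasure P] (hX_meas : AEMeasurable X P)
    (hY_meas : AEMeasurable Y P) (hm : 0 < m) (hX : ∀ᵐ ω ∂P, X ω ∈ Icc m M)
    (hY : ∀ᵐ ω ∂P, Y ω ∈ Icc m M) (h : ℝ × ℝ → ℝ) (hh : Measurable h)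
    (hc : ∀ p : ℝ × ℝ, 0 < p.1 → 0 < p.2 → ContinuousAt h p) :
    Integrable (fun ω => h (X ω, Y ω)) P := by
  refine integrable_comp_of_ae_mem_of_continuousOn (hX_meas.prodMk hY_meas)
    (isCompact_Icc.prod isCompact_Icc)
    (by filter_upwards [hX, hY] with ω hXω hYω using ⟨hXω, hYω⟩) hh
    (continuousOn_of_forall_continuousAt fun p hp => ?_)
  exact hc p (hm.trans_le hp.1.1) (hm.trans_le hp.2.1)

theorem ProbabilityTheory.IndepFun.integral_sq_sub_div_mul_mul_add_mul_add
    [IsProbabilityMeasure P] (hindep : IndepFun X Y P) (hid : IdentDistrib X Y P P)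
    (hm : 0 < m) (hX : ∀ᵐ ω ∂P, X ω ∈ Icc m M) (hY : ∀ᵐ ω ∂P, Y ω ∈ Icc m M) :
    ∫ ω, (X ω - Y ω) ^ 2 / (X ω * Y ω * (X ω + Y ω)) * (X ω + Y ω) ∂P =
      2 * ((∫ ω, X ω ∂P) * (∫ ω, (X ω)⁻¹ ∂P) - 1) := by
  have hint := integrable_comp_prodMk_of_ae_mem_Icc hid.aemeasurable_fst
    hid.aemeasurable_snd hm hX hY
  have hexpand : (fun ω => (X ω - Y ω) ^ 2 / (X ω * Y ω * (X ω + Y ω)) * (X ω + Y ω))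
      =ᵐ[P] fun ω => X ω * (Y ω)⁻¹ + (X ω)⁻¹ * Y ω - 2 := by
    filter_upwards [hX, hY] with ω hXω hYω
    have := hm.trans_le hXω.1
    have := hm.trans_le hYω.1
    field_simp
    ring
  have hXY : Integrable (fun ω => X ω * (Y ω)⁻¹) P :=
    hint (fun p => p.1 * p.2⁻¹) (by fun_prop) fun p _ _ => by fun_prop (disch := positivity)
  have hYX : Integrable (fun ω => (X ω)⁻¹ * Y ω) P :=
    hint (fun p => p.1⁻¹ * p.2) (by fun_prop) fun p _ _ => by fun_prop (disch := positivity)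
  have hmoment (φ ψ : ℝ → ℝ) (hφ : Measurable φ) (hψ : Measurable ψ) :=
    integral_comp_mul_comp_of_indepFun_of_identDistrib hindep hid hφ hψ
  rw [integral_congr_ae hexpand, integral_sub (by fun_prop) (integrable_const _),
    integral_add hXY hYX]
  simp only [hmoment (fun x => x) (fun x => x⁻¹) measurable_id measurable_inv,
    hmoment (fun x => x⁻¹) (fun x => x) measurable_inv measurable_id, integral_const,
    probReal_univ, smul_eq_mul, one_mul]
  ring

theorem ProbabilityTheory.IndepFun.integral_sq_sub_div_mul_mul_add_mul_add_sq
    [IsProbabilityMeasure P] (hindep : IndepFun X Y P) (hid : IdentDistrib X Y P P)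
    (hm : 0 < m) (hX : ∀ᵐ ω ∂P, X ω ∈ Icc m M) (hY : ∀ᵐ ω ∂P, Y ω ∈ Icc m M) :
    ∫ ω, (X ω - Y ω) ^ 2 / (X ω * Y ω * (X ω + Y ω)) * (X ω + Y ω) ^ 2 ∂P =
      2 * ((∫ ω, X ω ^ 2 ∂P) * (∫ ω, (X ω)⁻¹ ∂P) - ∫ ω, X ω ∂P) := by
  have hint := integrable_comp_prodMk_of_ae_mem_Icc hid.aemeasurable_fst
    hid.aemeasurable_snd hm hX hY
  have hexpand : (fun ω => (X ω - Y ω) ^ 2 / (X ω * Y ω * (X ω + Y ω)) * (X ω + Y ω) ^ 2)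
      =ᵐ[P] fun ω => X ω ^ 2 * (Y ω)⁻¹ + (X ω)⁻¹ * Y ω ^ 2 - X ω - Y ω := by
    filter_upwards [hX, hY] with ω hXω hYω
    have := hm.trans_le hXω.1
    have := hm.trans_le hYω.1
    field_simp
    ring
  have hXY : Integrable (fun ω => X ω ^ 2 * (Y ω)⁻¹) P :=
    hint (fun p => p.1 ^ 2 * p.2⁻¹) (by fun_prop) fun p _ _ => by fun_prop (disch := positivity)
  have hYX : Integrable (fun ω => (X ω)⁻¹ * Y ω ^ 2) P :=
    hint (fun p => p.1⁻¹ * p.2 ^ 2) (by fun_prop) fun p _ _ => by fun_prop (disch := positivity)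
  have hXint : Integrable X P := hint Prod.fst measurable_fst fun p _ _ => continuousAt_fst
  have hYint : Integrable Y P := hint Prod.snd measurable_snd fun p _ _ => continuousAt_snd
  have hmoment (φ ψ : ℝ → ℝ) (hφ : Measurable φ) (hψ : Measurable ψ) :=
    integral_comp_mul_comp_of_indepFun_of_identDistrib hindep hid hφ hψ
  rw [integral_congr_ae hexpand, integral_sub (by fun_prop) hYint,
    integral_sub (by fun_prop) hXint, integral_add hXY hYX, ← hid.integral_eq]
  simp only [hmoment (fun x => x ^ 2) (fun x => x⁻¹) (measurable_id.pow_const 2) measurable_inv,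
    hmoment (fun x => x⁻¹) (fun x => x ^ 2) measurable_inv (measurable_id.pow_const 2)]
  ring

end PositiveBounded

theorem two_mul_sq_div_le_of_sq_le {a e u v : ℝ} (ha : 0 ≤ a) (he : 0 ≤ e)
    (h : (2 * u) ^ 2 ≤ e * (2 * (v - a))) : 2 * u ^ 2 / (v / a - 1) ≤ a * e := by
  rcases le_or_gt (v / a - 1) 0 with hd | hd
  · exact (div_nonpos_of_nonneg_of_nonpos (by positivity) hd).trans (mul_nonneg ha he)
  · have ha' : a ≠ 0 := by
      rintro rfl
      norm_num at hd
    have hva : v - a = a * (v / a - 1) := by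
      field_simp
    rw [div_le_iff₀ hd]
    nlinarith

theorem stmt11_general {Ω : Type} [MeasurableSpace Ω] (P : Measure Ω) [IsProbabilityMeasure P]
    (C : ℝ) (X Y : Ω → ℝ)
    (hmX : Measurable X) (hmY : Measurable Y)
    (hindep : IndepFun X Y P)
    (hid : Measure.map X P = Measure.map Y P)
    (hXbd : ∀ᵐ ω ∂P, X ω ∈ Set.Icc 1 C) (hYbd : ∀ᵐ ω ∂P, Y ω ∈ Set.Icc 1 C) :
    (∫ ω, X ω ∂P) * ∫ ω, (X ω - Y ω) ^ 2 / (X ω * Y ω * (X ω + Y ω)) ∂P ≥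
      2 * ((∫ ω, X ω ∂P) * (∫ ω, (X ω)⁻¹ ∂P) - 1) ^ 2 /
        ((∫ ω, (X ω) ^ 2 ∂P) * (∫ ω, (X ω)⁻¹ ∂P) / (∫ ω, X ω ∂P) - 1) := by
  have hident : IdentDistrib X Y P P := ⟨hmX.aemeasurable, hmY.aemeasurable, hid⟩
  have hF : ∀ᵐ ω ∂P, 0 ≤ (X ω - Y ω) ^ 2 / (X ω * Y ω * (X ω + Y ω)) := by
    filter_upwards [hXbd, hYbd] with ω hXω hYω
    have := one_pos.trans_le hXω.1
    have := one_pos.trans_le hYω.1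
    positivity
  have hint := integrable_comp_prodMk_of_ae_mem_Icc hmX.aemeasurable hmY.aemeasurable
    one_pos hXbd hYbd
  have hCS := sq_integral_mul_le_integral_mul_integral_mul_sq (g := fun ω => X ω + Y ω) hF
    (hint (fun p => (p.1 - p.2) ^ 2 / (p.1 * p.2 * (p.1 + p.2))) (by fun_prop)
      fun p _ _ => by fun_prop (disch := positivity))
    (hint (fun p => (p.1 - p.2) ^ 2 / (p.1 * p.2 * (p.1 + p.2)) * (p.1 + p.2)) (by fun_prop)
      fun p _ _ => by fun_prop (disch := positivity))
    (hint (fun p => (p.1 - p.2) ^ 2 / (p.1 * p.2 * (p.1 + p.2)) * (p.1 + p.2) ^ 2)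
      (by fun_prop) fun p _ _ => by fun_prop (disch := positivity))
  rw [hindep.integral_sq_sub_div_mul_mul_add_mul_add hident one_pos hXbd hYbd,
    hindep.integral_sq_sub_div_mul_mul_add_mul_add_sq hident one_pos hXbd hYbd] at hCS
  exact two_mul_sq_div_le_of_sq_le
    (integral_nonneg_of_ae (hXbd.mono fun ω hω => zero_le_one.trans hω.1))
    (integral_nonneg_of_ae hF) hCS

theorem stmt11 {Ω : Type} [MeasurableSpace Ω] (P : Measure Ω) [IsProbabilityMeasure P]
    (C : ℝ) (hC : 1 ≤ C) (X Y : Ω → ℝ)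
    (hmX : Measurable X) (hmY : Measurable Y)
    (hindep : IndepFun X Y P)
    (hid : Measure.map X P = Measure.map Y P)
    (hXbd : ∀ᵐ ω ∂P, X ω ∈ Set.Icc 1 C) (hYbd : ∀ᵐ ω ∂P, Y ω ∈ Set.Icc 1 C)
    (hnondeg : (∫ ω, (X ω) ^ 2 ∂P) * (∫ ω, (X ω)⁻¹ ∂P) > ∫ ω, X ω ∂P) :
    (∫ ω, X ω ∂P) * ∫ ω, (X ω - Y ω) ^ 2 / (X ω * Y ω * (X ω + Y ω)) ∂P ≥
      2 * ((∫ ω, X ω ∂P) * (∫ ω, (X ω)⁻¹ ∂P) - 1) ^ 2 /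
        ((∫ ω, (X ω) ^ 2 ∂P) * (∫ ω, (X ω)⁻¹ ∂P) / (∫ ω, X ω ∂P) - 1) :=
  stmt11_general P C X Y hmX hmY hindep hid hXbd hYbd
end

section
/- Let X₁, X₂, X₃, X₄ be independent, identically distributed random variables taking values in [1, C] for some constant C ≥ 1, and put A := X₁ + X₂ and B := X₃ + X₄. Then E[(A·B/(A+B))²] ≤ (E[X₁])². -/
/-!
Pointwise, `(ab/(a+b))² ≤ ab/4` for `a, b ≥ 0`, because `4ab ≤ (a+b)²`. Taking expectations with
`A = X₁ + X₂` and `B = X₃ + X₄` independent, `E[AB] = E[A] E[B] = (2 E[X₁])²`.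
-/

open MeasureTheory ProbabilityTheory

lemma sq_mul_div_add_le_mul_div_four {a b : ℝ} (ha : 0 ≤ a) (hb : 0 ≤ b) :
    (a * b / (a + b)) ^ 2 ≤ a * b / 4 := by
  rcases (add_nonneg ha hb).eq_or_lt with hab | hab
  · rw [← hab, div_zero, zero_pow two_ne_zero]
    positivity
  rw [div_pow, div_le_div_iff₀ (by positivity) (by norm_num)]
  nlinarith [mul_nonneg (mul_nonneg ha hb) (sq_nonneg (a - b))]

lemma integral_sq_mul_div_add_le_of_indepFun {Ω : Type*} [MeasurableSpace Ω] {P : Measure Ω}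
    {A B : Ω → ℝ} (hAB : IndepFun A B P) (hA : Integrable A P) (hB : Integrable B P)
    (hA₀ : 0 ≤ᵐ[P] A) (hB₀ : 0 ≤ᵐ[P] B) :
    ∫ ω, (A ω * B ω / (A ω + B ω)) ^ 2 ∂P ≤ (∫ ω, A ω ∂P) * (∫ ω, B ω ∂P) / 4 := by
  have hAB_int : Integrable (A * B) P := hAB.integrable_mul hA hB
  calc ∫ ω, (A ω * B ω / (A ω + B ω)) ^ 2 ∂P
      ≤ ∫ ω, (A * B) ω / 4 ∂P := by
        refine integral_mono_of_nonneg (.of_forall fun _ ↦ sq_nonneg _) (hAB_int.div_const 4) ?_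
        filter_upwards [hA₀, hB₀] with ω ha hb
        exact sq_mul_div_add_le_mul_div_four ha hb
    _ = (∫ ω, A ω ∂P) * (∫ ω, B ω ∂P) / 4 := by
        rw [integral_div, hAB.integral_mul_eq_mul_integral hA.1 hB.1]

lemma integral_eq_of_map_eq {Ω : Type*} [MeasurableSpace Ω] {P : Measure Ω} {X Y : Ω → ℝ}
    (hX : Measurable X) (hY : Measurable Y) (h : P.map Y = P.map X) :
    ∫ ω, Y ω ∂P = ∫ ω, X ω ∂P :=
  IdentDistrib.integral_eq ⟨hY.aemeasurable, hX.aemeasurable, h⟩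

theorem stmt13_general {Ω : Type} [MeasurableSpace Ω] (P : Measure Ω) [IsProbabilityMeasure P]
    (C : ℝ) (X₁ X₂ X₃ X₄ : Ω → ℝ)
    (hm1 : Measurable X₁) (hm2 : Measurable X₂) (hm3 : Measurable X₃) (hm4 : Measurable X₄)
    (hindep : iIndepFun ![X₁, X₂, X₃, X₄] P)
    (hid2 : Measure.map X₂ P = Measure.map X₁ P)
    (hid3 : Measure.map X₃ P = Measure.map X₁ P)
    (hid4 : Measure.map X₄ P = Measure.map X₁ P)
    (hbd1 : ∀ᵐ ω ∂P, X₁ ω ∈ Set.Icc 1 C) (hbd2 : ∀ᵐ ω ∂P, X₂ ω ∈ Set.Icc 1 C)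
    (hbd3 : ∀ᵐ ω ∂P, X₃ ω ∈ Set.Icc 1 C) (hbd4 : ∀ᵐ ω ∂P, X₄ ω ∈ Set.Icc 1 C) :
    ∫ ω, ((X₁ ω + X₂ ω) * (X₃ ω + X₄ ω) /
        ((X₁ ω + X₂ ω) + (X₃ ω + X₄ ω))) ^ 2 ∂P ≤ (∫ ω, X₁ ω ∂P) ^ 2 := by
  have hi1 := Integrable.of_mem_Icc 1 C hm1.aemeasurable hbd1
  have hi2 := Integrable.of_mem_Icc 1 C hm2.aemeasurable hbd2
  have hi3 := Integrable.of_mem_Icc 1 C hm3.aemeasurable hbd3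
  have hi4 := Integrable.of_mem_Icc 1 C hm4.aemeasurable hbd4
  have hmeas : ∀ i, Measurable (![X₁, X₂, X₃, X₄] i) := by
    intro i; fin_cases i <;> assumption
  have hAB : IndepFun (X₁ + X₂) (X₃ + X₄) P :=
    hindep.indepFun_add_add hmeas 0 1 2 3 (by decide) (by decide) (by decide) (by decide)
  have hA₀ : 0 ≤ᵐ[P] X₁ + X₂ := by
    filter_upwards [hbd1, hbd2] with ω h1 h2
    exact add_nonneg (zero_le_one.trans h1.1) (zero_le_one.trans h2.1)
  have hB₀ : 0 ≤ᵐ[P] X₃ + X₄ := by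
    filter_upwards [hbd3, hbd4] with ω h3 h4
    exact add_nonneg (zero_le_one.trans h3.1) (zero_le_one.trans h4.1)
  calc _ ≤ (∫ ω, (X₁ + X₂) ω ∂P) * (∫ ω, (X₃ + X₄) ω ∂P) / 4 :=
        integral_sq_mul_div_add_le_of_indepFun hAB (hi1.add hi2) (hi3.add hi4) hA₀ hB₀
    _ = (∫ ω, X₁ ω ∂P) ^ 2 := by
        simp only [Pi.add_apply]
        rw [integral_add hi1 hi2, integral_add hi3 hi4, integral_eq_of_map_eq hm1 hm2 hid2,
          integral_eq_of_map_eq hm1 hm3 hid3, integral_eq_of_map_eq hm1 hm4 hid4]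
        ring

theorem stmt13 {Ω : Type} [MeasurableSpace Ω] (P : Measure Ω) [IsProbabilityMeasure P]
    (C : ℝ) (hC : 1 ≤ C) (X₁ X₂ X₃ X₄ : Ω → ℝ)
    (hm1 : Measurable X₁) (hm2 : Measurable X₂) (hm3 : Measurable X₃) (hm4 : Measurable X₄)
    (hindep : iIndepFun ![X₁, X₂, X₃, X₄] P)
    (hid2 : Measure.map X₂ P = Measure.map X₁ P)
    (hid3 : Measure.map X₃ P = Measure.map X₁ P)
    (hid4 : Measure.map X₄ P = Measure.map X₁ P)
    (hbd1 : ∀ᵐ ω ∂P, X₁ ω ∈ Set.Icc 1 C) (hbd2 : ∀ᵐ ω ∂P, X₂ ω ∈ Set.Icc 1 C)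
    (hbd3 : ∀ᵐ ω ∂P, X₃ ω ∈ Set.Icc 1 C) (hbd4 : ∀ᵐ ω ∂P, X₄ ω ∈ Set.Icc 1 C) :
    ∫ ω, ((X₁ ω + X₂ ω) * (X₃ ω + X₄ ω) /
        ((X₁ ω + X₂ ω) + (X₃ ω + X₄ ω))) ^ 2 ∂P ≤ (∫ ω, X₁ ω ∂P) ^ 2 :=
  stmt13_general P C X₁ X₂ X₃ X₄ hm1 hm2 hm3 hm4 hindep hid2 hid3 hid4 hbd1 hbd2 hbd3 hbd4
end

section
/- Let X₁, X₂, X₃, X₄ be independent, identically distributed random variables taking values in [1, C] for some constant C ≥ 1, and put A := X₁ + X₂ and B := X₃ + X₄. Then E[A·B/(A+B)] ≥ 2·E[X₁] / ( E[X₁²]/(E[X₁])² + 1 ). -/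
/-!
The map `t ↦ 1 / t` lies above its tangent line at any `s > 0`, so pointwise
`A B / (A + B) ≥ A B (2 s - (A + B)) / s²`. The right side is a polynomial in `A` and `B`, whose
expectation factorises by independence of `A = X₁ + X₂` and `B = X₃ + X₄`; the choice
`s = 2 E[A²] / E[A]` gives the bound `E[A]³ / (2 E[A²])`, which is the claimed one after
`E[A] = 2 E[X₁]` and `E[A²] = 2 E[X₁²] + 2 E[X₁]²`.
-/

open MeasureTheory ProbabilityTheory

lemma mul_mul_tangent_le_mul_div_add {a b : ℝ} (ha : 0 ≤ a) (hb : 0 ≤ b) (s : ℝ) :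
    a * b * (2 * s - (a + b)) / s ^ 2 ≤ a * b / (a + b) := by
  rcases eq_or_ne s 0 with rfl | hs
  · simp only [ne_eq, OfNat.ofNat_ne_zero, not_false_eq_true, zero_pow, div_zero]
    positivity
  rcases (add_nonneg ha hb).eq_or_lt with hab | hab
  · obtain ⟨rfl, rfl⟩ : a = 0 ∧ b = 0 := ⟨by linarith, by linarith⟩
    simp
  rw [div_le_div_iff₀ (by positivity) hab]
  nlinarith [mul_nonneg (mul_nonneg ha hb) (sq_nonneg (s - (a + b)))]

section

variable {Ω : Type*} [MeasurableSpace Ω] {P : Measure Ω} [IsProbabilityMeasure P]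

lemma integral_tangent_le_integral_mul_div_add {A B : Ω → ℝ} (hA : MemLp A 2 P)
    (hB : MemLp B 2 P) (hA0 : 0 ≤ᵐ[P] A) (hB0 : 0 ≤ᵐ[P] B) (hAB : IndepFun A B P) (s : ℝ) :
    (2 * s * (P[A] * P[B]) - (∫ ω, A ω ^ 2 ∂P) * P[B] - P[A] * ∫ ω, B ω ^ 2 ∂P) / s ^ 2 ≤
      ∫ ω, A ω * B ω / (A ω + B ω) ∂P := by
  have hA1 := hA.integrable one_le_two
  have hB1 := hB.integrable one_le_two
  have hA2B : IndepFun (fun ω => A ω ^ 2) B P := hAB.comp (measurable_id.pow_const 2) measurable_id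
  have hAB2 : IndepFun A (fun ω => B ω ^ 2) P := hAB.comp measurable_id (measurable_id.pow_const 2)
  have iAB : Integrable (fun ω => A ω * B ω) P := hAB.integrable_mul hA1 hB1
  have iA2B : Integrable (fun ω => A ω ^ 2 * B ω) P := hA2B.integrable_mul hA.integrable_sq hB1
  have iAB2 : Integrable (fun ω => A ω * B ω ^ 2) P := hAB2.integrable_mul hA1 hB.integrable_sq
  have iH : Integrable (fun ω => A ω * B ω / (A ω + B ω)) P := by
    refine hA1.mono' ((hA.1.aemeasurable.mul hB.1.aemeasurable).div
      (hA.1.aemeasurable.add hB.1.aemeasurable)).aestronglyMeasurable ?_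
    filter_upwards [hA0, hB0] with ω ha hb
    rw [Real.norm_of_nonneg (div_nonneg (mul_nonneg ha hb) (add_nonneg ha hb))]
    exact div_le_of_le_mul₀ (add_nonneg ha hb) ha (by nlinarith [mul_nonneg ha ha])
  have hexp : ∀ ω, A ω * B ω * (2 * s - (A ω + B ω)) / s ^ 2 =
      (2 * s * (A ω * B ω) - A ω ^ 2 * B ω - A ω * B ω ^ 2) / s ^ 2 := fun ω => by ring
  have iT : Integrable (fun ω => 2 * s * (A ω * B ω) - A ω ^ 2 * B ω) P :=
    (iAB.const_mul _).sub iA2B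
  calc (2 * s * (P[A] * P[B]) - (∫ ω, A ω ^ 2 ∂P) * P[B] - P[A] * ∫ ω, B ω ^ 2 ∂P) / s ^ 2
      = ∫ ω, A ω * B ω * (2 * s - (A ω + B ω)) / s ^ 2 ∂P := by
        simp_rw [hexp, integral_div]
        rw [integral_sub iT iAB2, integral_sub (iAB.const_mul _) iA2B, integral_const_mul,
          hAB.integral_fun_mul_eq_mul_integral hA.1 hB.1,
          hA2B.integral_fun_mul_eq_mul_integral hA.integrable_sq.1 hB.1,
          hAB2.integral_fun_mul_eq_mul_integral hA.1 hB.integrable_sq.1]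
    _ ≤ ∫ ω, A ω * B ω / (A ω + B ω) ∂P := by
        refine integral_mono_ae ?_ iH ?_
        · simpa only [hexp, Pi.sub_apply] using (iT.sub iAB2).div_const (s ^ 2)
        · filter_upwards [hA0, hB0] with ω ha hb using mul_mul_tangent_le_mul_div_add ha hb s

lemma integral_pow_three_div_le_integral_mul_div_add {A B : Ω → ℝ} (hA : MemLp A 2 P)
    (hB : MemLp B 2 P) (hA0 : 0 ≤ᵐ[P] A) (hB0 : 0 ≤ᵐ[P] B) (hAB : IndepFun A B P)
    (hmean : P[B] = P[A]) (hsq : ∫ ω, B ω ^ 2 ∂P = ∫ ω, A ω ^ 2 ∂P) :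
    P[A] ^ 3 / (2 * ∫ ω, A ω ^ 2 ∂P) ≤ ∫ ω, A ω * B ω / (A ω + B ω) ∂P := by
  have hH : 0 ≤ ∫ ω, A ω * B ω / (A ω + B ω) ∂P := integral_nonneg_of_ae <| by
    filter_upwards [hA0, hB0] with ω ha hb using div_nonneg (mul_nonneg ha hb) (add_nonneg ha hb)
  by_cases hdeg : P[A] = 0 ∨ ∫ ω, A ω ^ 2 ∂P = 0
  · rcases hdeg with h | h <;> simpa [h] using hH
  obtain ⟨hm, hq⟩ := not_or.mp hdeg
  have hbound := integral_tangent_le_integral_mul_div_add hA hB hA0 hB0 hAB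
    (2 * (∫ ω, A ω ^ 2 ∂P) / P[A])
  rw [hmean, hsq] at hbound
  convert hbound using 1
  field_simp
  ring

lemma integral_add_sq_of_indepFun {X Y : Ω → ℝ} (hX : MemLp X 2 P) (hY : MemLp Y 2 P)
    (hXY : IndepFun X Y P) :
    ∫ ω, (X ω + Y ω) ^ 2 ∂P = ∫ ω, X ω ^ 2 ∂P + 2 * (P[X] * P[Y]) + ∫ ω, Y ω ^ 2 ∂P := by
  have iXY : Integrable (fun ω => 2 * (X ω * Y ω)) P :=
    (hXY.integrable_mul (hX.integrable one_le_two) (hY.integrable one_le_two)).const_mul 2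
  have iX2XY : Integrable (fun ω => X ω ^ 2 + 2 * (X ω * Y ω)) P := hX.integrable_sq.add iXY
  simp_rw [add_sq, mul_assoc]
  rw [integral_add iX2XY hY.integrable_sq,
    integral_add hX.integrable_sq iXY, integral_const_mul,
    hXY.integral_fun_mul_eq_mul_integral hX.1 hY.1]

lemma moments_add_of_identDistrib {X Y Z : Ω → ℝ} (hX : MemLp X 2 P) (hY : MemLp Y 2 P)
    (hXY : IndepFun X Y P) (hXZ : IdentDistrib X Z P P) (hYZ : IdentDistrib Y Z P P) :
    ∫ ω, X ω + Y ω ∂P = 2 * P[Z] ∧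
      ∫ ω, (X ω + Y ω) ^ 2 ∂P = 2 * ∫ ω, Z ω ^ 2 ∂P + 2 * P[Z] ^ 2 := by
  have hsq {W : Ω → ℝ} (h : IdentDistrib W Z P P) : ∫ ω, W ω ^ 2 ∂P = ∫ ω, Z ω ^ 2 ∂P :=
    (h.comp (measurable_id.pow_const 2)).integral_eq
  constructor
  · rw [integral_add (hX.integrable one_le_two) (hY.integrable one_le_two), hXZ.integral_eq,
      hYZ.integral_eq]
    ring
  · rw [integral_add_sq_of_indepFun hX hY hXY, hsq hXZ, hsq hYZ, hXZ.integral_eq,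
      hYZ.integral_eq]
    ring

end

theorem stmt14_general {Ω : Type} [MeasurableSpace Ω] (P : Measure Ω) [IsProbabilityMeasure P]
    (C : ℝ) (X₁ X₂ X₃ X₄ : Ω → ℝ)
    (hm1 : Measurable X₁) (hm2 : Measurable X₂) (hm3 : Measurable X₃) (hm4 : Measurable X₄)
    (hindep : iIndepFun ![X₁, X₂, X₃, X₄] P)
    (hid2 : Measure.map X₂ P = Measure.map X₁ P)
    (hid3 : Measure.map X₃ P = Measure.map X₁ P)
    (hid4 : Measure.map X₄ P = Measure.map X₁ P)
    (hbd1 : ∀ᵐ ω ∂P, X₁ ω ∈ Set.Icc 1 C) (hbd2 : ∀ᵐ ω ∂P, X₂ ω ∈ Set.Icc 1 C)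
    (hbd3 : ∀ᵐ ω ∂P, X₃ ω ∈ Set.Icc 1 C) (hbd4 : ∀ᵐ ω ∂P, X₄ ω ∈ Set.Icc 1 C) :
    ∫ ω, (X₁ ω + X₂ ω) * (X₃ ω + X₄ ω) /
        ((X₁ ω + X₂ ω) + (X₃ ω + X₄ ω)) ∂P ≥
      2 * (∫ ω, X₁ ω ∂P) /
        ((∫ ω, (X₁ ω) ^ 2 ∂P) / (∫ ω, X₁ ω ∂P) ^ 2 + 1) := by
  have hL2 {X : Ω → ℝ} (hX : Measurable X) (hb : ∀ᵐ ω ∂P, X ω ∈ Set.Icc 1 C) : MemLp X 2 P :=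
    memLp_of_bounded hb hX.aestronglyMeasurable 2
  have hid {X : Ω → ℝ} (hX : Measurable X) (h : Measure.map X P = Measure.map X₁ P) :
      IdentDistrib X X₁ P P := ⟨hX.aemeasurable, hm1.aemeasurable, h⟩
  have hmeas : ∀ i, Measurable (![X₁, X₂, X₃, X₄] i) := by
    intro i; fin_cases i <;> assumption
  obtain ⟨hA1, hA2⟩ := moments_add_of_identDistrib (hL2 hm1 hbd1) (hL2 hm2 hbd2)
    (hindep.indepFun (i := 0) (j := 1) (by decide)) (.refl hm1.aemeasurable) (hid hm2 hid2)
  obtain ⟨hB1, hB2⟩ := moments_add_of_identDistrib (hL2 hm3 hbd3) (hL2 hm4 hbd4)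
    (hindep.indepFun (i := 2) (j := 3) (by decide)) (hid hm3 hid3) (hid hm4 hid4)
  have hsum_nonneg {X Y : Ω → ℝ} (hX : ∀ᵐ ω ∂P, X ω ∈ Set.Icc 1 C)
      (hY : ∀ᵐ ω ∂P, Y ω ∈ Set.Icc 1 C) : 0 ≤ᵐ[P] fun ω => X ω + Y ω := by
    filter_upwards [hX, hY] with ω hx hy
    exact add_nonneg (zero_le_one.trans hx.1) (zero_le_one.trans hy.1)
  have hbound := integral_pow_three_div_le_integral_mul_div_add
    (A := fun ω => X₁ ω + X₂ ω) (B := fun ω => X₃ ω + X₄ ω)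
    ((hL2 hm1 hbd1).add (hL2 hm2 hbd2)) ((hL2 hm3 hbd3).add (hL2 hm4 hbd4))
    (hsum_nonneg hbd1 hbd2) (hsum_nonneg hbd3 hbd4)
    (hindep.indepFun_add_add hmeas 0 1 2 3 (by decide) (by decide) (by decide) (by decide))
    (hB1.trans hA1.symm) (hB2.trans hA2.symm)
  rw [hA1, hA2] at hbound
  refine le_of_eq_of_le ?_ hbound
  rcases eq_or_ne P[X₁] 0 with h | h
  · simp [h]
  · field_simp

theorem stmt14 {Ω : Type} [MeasurableSpace Ω] (P : Measure Ω) [IsProbabilityMeasure P]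
    (C : ℝ) (hC : 1 ≤ C) (X₁ X₂ X₃ X₄ : Ω → ℝ)
    (hm1 : Measurable X₁) (hm2 : Measurable X₂) (hm3 : Measurable X₃) (hm4 : Measurable X₄)
    (hindep : iIndepFun ![X₁, X₂, X₃, X₄] P)
    (hid2 : Measure.map X₂ P = Measure.map X₁ P)
    (hid3 : Measure.map X₃ P = Measure.map X₁ P)
    (hid4 : Measure.map X₄ P = Measure.map X₁ P)
    (hbd1 : ∀ᵐ ω ∂P, X₁ ω ∈ Set.Icc 1 C) (hbd2 : ∀ᵐ ω ∂P, X₂ ω ∈ Set.Icc 1 C)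
    (hbd3 : ∀ᵐ ω ∂P, X₃ ω ∈ Set.Icc 1 C) (hbd4 : ∀ᵐ ω ∂P, X₄ ω ∈ Set.Icc 1 C) :
    ∫ ω, (X₁ ω + X₂ ω) * (X₃ ω + X₄ ω) /
        ((X₁ ω + X₂ ω) + (X₃ ω + X₄ ω)) ∂P ≥
      2 * (∫ ω, X₁ ω ∂P) /
        ((∫ ω, (X₁ ω) ^ 2 ∂P) / (∫ ω, X₁ ω ∂P) ^ 2 + 1) :=
  stmt14_general P C X₁ X₂ X₃ X₄ hm1 hm2 hm3 hm4 hindep hid2 hid3 hid4 hbd1 hbd2 hbd3 hbd4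
end
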